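/- arXiv:2307.13934 — 11 statements merged into one kernel-verified Lean document; each statement's English description precedes it below -/
import Mathlib

section
/- Let Ω ⊆ ℝ^d be a measurable set of finite measure, J : ℝ^d → ℝ an even, bounded, nonnegative measurable function, F : ℝ → ℝ continuously differentiable, and φ, η : Ω → ℝ bounded measurable functions. Define the nonlocal free energy E(φ) = (ε²/4) ∫_Ω ∫_Ω J(x-y)(φ(x)-φ(y))² dy dx + ∫_Ω F(φ(x)) dx for a constant ε > 0. Then lim_{θ→0} (E(φ+θη) - E(φ))/θ = ∫_Ω (ε² (Lφ)(x) + F'(φ(x))) η(x) dx, where (Lφ)(x) = ∫_Ω J(x-y)[φ(x)-φ(y)] dy. -/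
/-!
The energy is a sum of a quadratic form and a potential term, and along the line `φ + θη` each
is a parametric integral `θ ↦ ∫ c z * G (u z + θ * v z)` of bounded data: for the quadratic form
`G = (·)²` on `Ω × Ω` with weight `J (x - y)`, for the potential `G = F` with weight `1`. Since
`G` is `C¹`, `G'` is bounded on the compact range of `u + θ v` for `|θ| < 1`, so dominated
convergence differentiates under the integral sign at `θ = 0`. The derivative of the quadratic
part is `2 ∫∫ J (x - y) (φ x - φ y) (η x - η y)`; by the evenness of `J`, swapping `x` and `y`
turns the `η y` half into minus the `η x` half, which gives `4 ∫ (Lφ) η`.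
-/

open MeasureTheory Metric

section ParametricIntegral

variable {β : Type*} [MeasurableSpace β] {ν : Measure β} [IsFiniteMeasure ν]
  {G : ℝ → ℝ} {c u v : β → ℝ} {Cc Cu Cv : ℝ}

theorem integrable_mul_comp_add_mul (hG : Continuous G) (hc : AEStronglyMeasurable c ν)
    (hu : AEStronglyMeasurable u ν) (hv : AEStronglyMeasurable v ν) (hcC : ∀ z, ‖c z‖ ≤ Cc)
    (huC : ∀ z, ‖u z‖ ≤ Cu) (hvC : ∀ z, ‖v z‖ ≤ Cv) (θ : ℝ) :
    Integrable (fun z => c z * G (u z + θ * v z)) ν := by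
  obtain ⟨M, hM⟩ := (isCompact_closedBall (0 : ℝ) (Cu + ‖θ‖ * Cv)).exists_bound_of_continuousOn
    hG.continuousOn
  refine .of_bound (hc.mul (hG.comp_aestronglyMeasurable (hu.add (hv.const_mul θ)))) (Cc * M)
    (.of_forall fun z => norm_mul_le_of_le (hcC z) (hM _ ?_))
  rw [mem_closedBall_zero_iff]
  exact norm_add_le_of_le (huC z) (norm_mul_le_of_le le_rfl (hvC z))

theorem hasDerivAt_integral_mul_comp_add_mul (hG : ContDiff ℝ 1 G) (hc : AEStronglyMeasurable c ν)
    (hu : AEStronglyMeasurable u ν) (hv : AEStronglyMeasurable v ν) (hcC : ∀ z, ‖c z‖ ≤ Cc)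
    (huC : ∀ z, ‖u z‖ ≤ Cu) (hvC : ∀ z, ‖v z‖ ≤ Cv) :
    Integrable (fun z => c z * (deriv G (u z) * v z)) ν ∧
      HasDerivAt (fun θ => ∫ z, c z * G (u z + θ * v z) ∂ν)
        (∫ z, c z * (deriv G (u z) * v z) ∂ν) 0 := by
  have hG' : Continuous (deriv G) := hG.continuous_deriv le_rfl
  obtain ⟨M, hM⟩ :=
    (isCompact_closedBall (0 : ℝ) (Cu + Cv)).exists_bound_of_continuousOn hG'.continuousOn
  have hmem : ∀ θ ∈ ball (0 : ℝ) 1, ∀ z, u z + θ * v z ∈ closedBall 0 (Cu + Cv) := by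
    intro θ hθ z
    rw [mem_ball_zero_iff] at hθ
    rw [mem_closedBall_zero_iff]
    refine norm_add_le_of_le (huC z) ?_
    calc ‖θ * v z‖ ≤ 1 * Cv := norm_mul_le_of_le hθ.le (hvC z)
      _ = Cv := one_mul Cv
  have hderiv : ∀ z, ∀ θ : ℝ, HasDerivAt (fun θ => c z * G (u z + θ * v z))
      (c z * (deriv G (u z + θ * v z) * v z)) θ := by
    intro z θ
    have hline : HasDerivAt (fun θ => u z + θ * v z) (v z) θ := by
      simpa using ((hasDerivAt_id θ).mul_const (v z)).const_add (u z)
    exact ((hG.differentiable one_ne_zero _).hasDerivAt.comp θ hline).const_mul (c z)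
  have key := hasDerivAt_integral_of_dominated_loc_of_deriv_le (ball_mem_nhds 0 one_pos)
    (.of_forall fun θ => (integrable_mul_comp_add_mul hG.continuous hc hu hv hcC huC hvC θ).1)
    (integrable_mul_comp_add_mul hG.continuous hc hu hv hcC huC hvC 0)
    (hc.mul ((hG'.comp_aestronglyMeasurable (hu.add (hv.const_mul 0))).mul hv))
    (.of_forall fun z θ hθ => norm_mul_le_of_le (hcC z) (norm_mul_le_of_le (hM _ (hmem θ hθ z))
      (hvC z)))
    (integrable_const (Cc * (M * Cv))) (.of_forall fun z θ _ => hderiv z θ)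
  simpa only [zero_mul, add_zero] using key

end ParametricIntegral

section NonlocalOperator

variable {α : Type*} [MeasurableSpace α] {μ : Measure α} {K : α → α → ℝ} {F : ℝ → ℝ}
  {u v : α → ℝ} {CK Cu Cv : ℝ}

noncomputable def nonlocalOp (μ : Measure α) (K : α → α → ℝ) (u : α → ℝ) (x : α) : ℝ :=
  ∫ y, K x y * (u x - u y) ∂μ

noncomputable def nonlocalFreeEnergy (μ : Measure α) (K : α → α → ℝ) (F : ℝ → ℝ) (ε : ℝ)
    (u : α → ℝ) : ℝ :=
  ε ^ 2 / 4 * ∫ x, ∫ y, K x y * (u x - u y) ^ 2 ∂μ ∂μ + ∫ x, F (u x) ∂μ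

theorem integrable_kernel_mul_sub_mul [IsFiniteMeasure μ]
    (hK : AEStronglyMeasurable (Function.uncurry K) (μ.prod μ)) (hKC : ∀ x y, ‖K x y‖ ≤ CK)
    (hu : AEStronglyMeasurable u μ) (huC : ∀ x, ‖u x‖ ≤ Cu)
    (hv : AEStronglyMeasurable v μ) (hvC : ∀ x, ‖v x‖ ≤ Cv) :
    Integrable (fun z : α × α => K z.1 z.2 * (u z.1 - u z.2) * v z.1) (μ.prod μ) :=
  .of_bound ((hK.mul (hu.comp_fst.sub hu.comp_snd)).mul hv.comp_fst) (CK * (Cu + Cu) * Cv)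
    (.of_forall fun z => norm_mul_le_of_le
      (norm_mul_le_of_le (hKC z.1 z.2) (norm_sub_le_of_le (huC z.1) (huC z.2))) (hvC z.1))

theorem integrable_nonlocalOp_mul [SFinite μ]
    (h : Integrable (fun z : α × α => K z.1 z.2 * (u z.1 - u z.2) * v z.1) (μ.prod μ)) :
    Integrable (fun x => nonlocalOp μ K u x * v x) μ := by
  simpa only [nonlocalOp, integral_mul_const] using h.integral_prod_left

theorem integral_prod_mul_sub_mul_sub_of_symm [SFinite μ] (hK : ∀ x y, K y x = K x y)
    (h : Integrable (fun z : α × α => K z.1 z.2 * (u z.1 - u z.2) * v z.1) (μ.prod μ)) :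
    ∫ z, K z.1 z.2 * ((u z.1 - u z.2) * (v z.1 - v z.2)) ∂μ.prod μ =
      2 * ∫ x, nonlocalOp μ K u x * v x ∂μ := by
  have hflip : ∀ z : α × α, K z.1 z.2 * (u z.1 - u z.2) * v z.2 =
      -(K z.2 z.1 * (u z.2 - u z.1) * v z.2) := fun z => by rw [hK]; ring
  have hswap : ∫ z, K z.1 z.2 * (u z.1 - u z.2) * v z.2 ∂μ.prod μ =
      -∫ z, K z.1 z.2 * (u z.1 - u z.2) * v z.1 ∂μ.prod μ := by
    rw [← integral_prod_swap, ← integral_neg]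
    congr 1; ext z; simp only [Prod.fst_swap, Prod.snd_swap, hK z.1 z.2]; ring
  have hiterated : ∫ z, K z.1 z.2 * (u z.1 - u z.2) * v z.1 ∂μ.prod μ =
      ∫ x, nonlocalOp μ K u x * v x ∂μ := by
    rw [← integral_integral (f := fun x y => K x y * (u x - u y) * v x) h]
    simp only [nonlocalOp, integral_mul_const]
  calc ∫ z, K z.1 z.2 * ((u z.1 - u z.2) * (v z.1 - v z.2)) ∂μ.prod μ
      = ∫ z, (K z.1 z.2 * (u z.1 - u z.2) * v z.1 - K z.1 z.2 * (u z.1 - u z.2) * v z.2)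
          ∂μ.prod μ := by
        congr 1; ext z; ring
    _ = 2 * ∫ x, nonlocalOp μ K u x * v x ∂μ := by
        rw [integral_sub h (h.swap.neg.congr (.of_forall fun z => (hflip z).symm)), hswap,
          hiterated]
        ring

theorem hasDerivAt_integral_integral_kernel_sq [IsFiniteMeasure μ] (hKsymm : ∀ x y, K y x = K x y)
    (hK : AEStronglyMeasurable (Function.uncurry K) (μ.prod μ)) (hKC : ∀ x y, ‖K x y‖ ≤ CK)
    (hu : AEStronglyMeasurable u μ) (huC : ∀ x, ‖u x‖ ≤ Cu)
    (hv : AEStronglyMeasurable v μ) (hvC : ∀ x, ‖v x‖ ≤ Cv) :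
    HasDerivAt (fun θ => ∫ x, ∫ y, K x y * ((u x + θ * v x) - (u y + θ * v y)) ^ 2 ∂μ ∂μ)
      (4 * ∫ x, nonlocalOp μ K u x * v x ∂μ) 0 := by
  have hdu : AEStronglyMeasurable (fun z : α × α => u z.1 - u z.2) (μ.prod μ) :=
    hu.comp_fst.sub hu.comp_snd
  have hdv : AEStronglyMeasurable (fun z : α × α => v z.1 - v z.2) (μ.prod μ) :=
    hv.comp_fst.sub hv.comp_snd
  have hduC : ∀ z : α × α, ‖u z.1 - u z.2‖ ≤ Cu + Cu := fun z => norm_sub_le_of_le (huC _) (huC _)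
  have hdvC : ∀ z : α × α, ‖v z.1 - v z.2‖ ≤ Cv + Cv := fun z => norm_sub_le_of_le (hvC _) (hvC _)
  have hfubini : (fun θ => ∫ x, ∫ y, K x y * ((u x + θ * v x) - (u y + θ * v y)) ^ 2 ∂μ ∂μ) =
      fun θ => ∫ z, K z.1 z.2 * ((u z.1 - u z.2) + θ * (v z.1 - v z.2)) ^ 2 ∂μ.prod μ := by
    funext θ
    rw [integral_integral ((integrable_mul_comp_add_mul (continuous_pow 2) hK hdu hdv
      (fun z => hKC z.1 z.2) hduC hdvC θ).congr (.of_forall fun z => by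
        simp only [Function.uncurry]; ring))]
    congr 1; ext z; ring
  rw [hfubini]
  convert (hasDerivAt_integral_mul_comp_add_mul (c := fun z => K z.1 z.2)
    (G := fun t => t ^ 2) (contDiff_id.pow 2) hK hdu hdv
    (fun z => hKC z.1 z.2) hduC hdvC).2 using 1
  have hsq : ∀ z : α × α, K z.1 z.2 * (deriv (fun t => t ^ 2) (u z.1 - u z.2) * (v z.1 - v z.2)) =
      2 * (K z.1 z.2 * ((u z.1 - u z.2) * (v z.1 - v z.2))) := fun z => by
    simp only [differentiableAt_fun_id, deriv_fun_pow, deriv_id'', Nat.cast_ofNat, pow_one, mul_one,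
      Nat.add_one_sub_one]
    ring
  simp only [hsq]
  rw [integral_const_mul, integral_prod_mul_sub_mul_sub_of_symm hKsymm
    (integrable_kernel_mul_sub_mul hK hKC hu huC hv hvC)]
  ring

theorem hasDerivAt_nonlocalFreeEnergy [IsFiniteMeasure μ] (hKsymm : ∀ x y, K y x = K x y)
    (hK : AEStronglyMeasurable (Function.uncurry K) (μ.prod μ)) (hKC : ∀ x y, ‖K x y‖ ≤ CK)
    (hF : ContDiff ℝ 1 F) (hu : AEStronglyMeasurable u μ) (huC : ∀ x, ‖u x‖ ≤ Cu)
    (hv : AEStronglyMeasurable v μ) (hvC : ∀ x, ‖v x‖ ≤ Cv) (ε : ℝ) :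
    HasDerivAt (fun θ => nonlocalFreeEnergy μ K F ε (fun x => u x + θ * v x))
      (∫ x, (ε ^ 2 * nonlocalOp μ K u x + deriv F (u x)) * v x ∂μ) 0 := by
  obtain ⟨hF'int, hFderiv⟩ := hasDerivAt_integral_mul_comp_add_mul (c := fun _ => 1) hF
    aestronglyMeasurable_const hu hv (fun _ => norm_one.le) huC hvC
  simp only [one_mul] at hF'int hFderiv
  have hLint := integrable_nonlocalOp_mul (integrable_kernel_mul_sub_mul hK hKC hu huC hv hvC)
  have hvalue : ∫ x, (ε ^ 2 * nonlocalOp μ K u x + deriv F (u x)) * v x ∂μ =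
      ε ^ 2 / 4 * (4 * ∫ x, nonlocalOp μ K u x * v x ∂μ) + ∫ x, deriv F (u x) * v x ∂μ := by
    simp only [add_mul, mul_assoc]
    rw [integral_add (hLint.const_mul _) hF'int, integral_const_mul]
    ring
  rw [hvalue]
  exact ((hasDerivAt_integral_integral_kernel_sq hKsymm hK hKC hu huC hv hvC).const_mul
    (ε ^ 2 / 4)).add hFderiv

end NonlocalOperator

theorem nonlocal_energy_gateaux_derivative_general {d : ℕ} (Ω : Set (Fin d → ℝ))
    (hΩfin : volume Ω < ⊤)
    (J : (Fin d → ℝ) → ℝ) (hJeven : ∀ x, J (-x) = J x)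
    (hJbdd : ∃ C, ∀ x, |J x| ≤ C) (hJmeas : Measurable J)
    (F : ℝ → ℝ) (hF : ContDiff ℝ 1 F)
    (φ η : (Fin d → ℝ) → ℝ)
    (hφbdd : ∃ C, ∀ x, |φ x| ≤ C) (hφmeas : Measurable φ)
    (hηbdd : ∃ C, ∀ x, |η x| ≤ C) (hηmeas : Measurable η)
    (ε : ℝ) :
    Filter.Tendsto
      (fun θ : ℝ =>
        ((ε ^ 2 / 4 *
            ∫ x in Ω, ∫ y in Ω,
              J (x - y) * ((φ x + θ * η x) - (φ y + θ * η y)) ^ 2) +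
          (∫ x in Ω, F (φ x + θ * η x)) -
          ((ε ^ 2 / 4 * ∫ x in Ω, ∫ y in Ω, J (x - y) * (φ x - φ y) ^ 2) +
            ∫ x in Ω, F (φ x))) / θ)
      (nhdsWithin 0 {(0 : ℝ)}ᶜ)
      (nhds (∫ x in Ω,
        (ε ^ 2 * (∫ y in Ω, J (x - y) * (φ x - φ y)) + deriv F (φ x)) * η x)) := by
  obtain ⟨CJ, hCJ⟩ := hJbdd
  obtain ⟨Cφ, hCφ⟩ := hφbdd
  obtain ⟨Cη, hCη⟩ := hηbdd
  have : IsFiniteMeasure (volume.restrict Ω) := isFiniteMeasure_restrict.2 hΩfin.ne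
  have hE := hasDerivAt_nonlocalFreeEnergy (μ := volume.restrict Ω) (K := fun x y => J (x - y))
    (fun x y => by rw [← neg_sub, hJeven])
    (hJmeas.comp (measurable_fst.sub measurable_snd)).aestronglyMeasurable (fun x y => hCJ (x - y))
    hF hφmeas.aestronglyMeasurable hCφ hηmeas.aestronglyMeasurable hCη ε
  refine (hasDerivAt_iff_tendsto_slope.1 hE).congr fun θ => ?_
  simp only [slope, nonlocalFreeEnergy, zero_mul, add_zero, vsub_eq_sub, sub_zero, smul_eq_mul,
    div_eq_inv_mul]

/-- the Gateaux derivative of the nonlocal free energy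
`E(φ) = (ε²/4)∫∫ J(x-y)(φ(x)-φ(y))² + ∫ F(φ)` is
`∫ (ε² (Lφ)(x) + F'(φ(x))) η(x) dx` with `(Lφ)(x) = ∫_Ω J(x-y)(φ(x)-φ(y)) dy`. -/
theorem nonlocal_energy_gateaux_derivative {d : ℕ} (Ω : Set (Fin d → ℝ))
    (hΩ : MeasurableSet Ω) (hΩfin : volume Ω < ⊤)
    (J : (Fin d → ℝ) → ℝ) (hJeven : ∀ x, J (-x) = J x)
    (hJbdd : ∃ C, ∀ x, |J x| ≤ C) (hJnn : ∀ x, 0 ≤ J x) (hJmeas : Measurable J)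
    (F : ℝ → ℝ) (hF : ContDiff ℝ 1 F)
    (φ η : (Fin d → ℝ) → ℝ)
    (hφbdd : ∃ C, ∀ x, |φ x| ≤ C) (hφmeas : Measurable φ)
    (hηbdd : ∃ C, ∀ x, |η x| ≤ C) (hηmeas : Measurable η)
    (ε : ℝ) (hε : 0 < ε) :
    Filter.Tendsto
      (fun θ : ℝ =>
        ((ε ^ 2 / 4 *
            ∫ x in Ω, ∫ y in Ω,
              J (x - y) * ((φ x + θ * η x) - (φ y + θ * η y)) ^ 2) +
          (∫ x in Ω, F (φ x + θ * η x)) -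
          ((ε ^ 2 / 4 * ∫ x in Ω, ∫ y in Ω, J (x - y) * (φ x - φ y) ^ 2) +
            ∫ x in Ω, F (φ x))) / θ)
      (nhdsWithin 0 {(0 : ℝ)}ᶜ)
      (nhds (∫ x in Ω,
        (ε ^ 2 * (∫ y in Ω, J (x - y) * (φ x - φ y)) + deriv F (φ x)) * η x)) :=
  nonlocal_energy_gateaux_derivative_general Ω hΩfin J hJeven hJbdd hJmeas F hF φ η hφbdd hφmeas
    hηbdd hηmeas ε
end

section
/- Let β > 0 and let f : ℝ → ℝ be continuously differentiable on [-β, β] with f(β) ≤ 0 ≤ f(-β). If κ is a constant with κ ≥ max_{ξ ∈ [-β,β]} |f'(ξ)|, then |f(ξ) + κξ| ≤ κβ for all ξ ∈ [-β, β]. -/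
/-! The stabilized map `ξ ↦ f ξ + κ ξ` has derivative `f' + κ ≥ 0`, so it is monotone on
`[-β, β]` and is squeezed between its endpoint values `f(-β) - κβ ≥ -κβ` and
`f(β) + κβ ≤ κβ`. -/

lemma monotoneOn_add_const_mul_of_neg_le_deriv {D : Set ℝ} (hD : Convex ℝ D) {f f' : ℝ → ℝ}
    (hderiv : ∀ x ∈ D, HasDerivWithinAt f (f' x) D x) {κ : ℝ}
    (hκ : ∀ x ∈ interior D, -κ ≤ f' x) :
    MonotoneOn (fun x => f x + κ * x) D := by
  refine monotoneOn_of_hasDerivWithinAt_nonneg hD (f' := fun x => f' x + κ)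
    (ContinuousOn.add (fun x hx => (hderiv x hx).continuousWithinAt) (by fun_prop))
    (fun x hx => ?_) (fun x hx => by linarith [hκ x hx])
  have hfx := (hderiv x (interior_subset hx)).mono interior_subset
  exact (hfx.add ((hasDerivWithinAt_id x _).const_mul κ)).congr_deriv (by rw [mul_one])

theorem stabilized_nonlinearity_bound_general (β : ℝ)
    (f f' : ℝ → ℝ)
    (hderiv : ∀ ξ ∈ Set.Icc (-β) β,
      HasDerivWithinAt f (f' ξ) (Set.Icc (-β) β) ξ)
    (hfβ : f β ≤ 0) (hfmβ : 0 ≤ f (-β))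
    (κ : ℝ) (hκ : ∀ ξ ∈ Set.Icc (-β) β, |f' ξ| ≤ κ) :
    ∀ ξ ∈ Set.Icc (-β) β, |f ξ + κ * ξ| ≤ κ * β := by
  have hmono : MonotoneOn (fun x => f x + κ * x) (Set.Icc (-β) β) :=
    monotoneOn_add_const_mul_of_neg_le_deriv (convex_Icc _ _) hderiv
      fun x hx => neg_le_of_abs_le (hκ x (interior_subset hx))
  intro ξ hξ
  have hβ : -β ≤ β := hξ.1.trans hξ.2
  have upper := hmono hξ (Set.right_mem_Icc.2 hβ) hξ.2
  have lower := hmono (Set.left_mem_Icc.2 hβ) hξ hξ.1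
  rw [abs_le]
  constructor <;> linarith

/-- Lemma 2: if `f` is continuously differentiable on `[-β, β]`
with `f(β) ≤ 0 ≤ f(-β)` and `κ ≥ max_{ξ∈[-β,β]} |f'(ξ)|`, then
`|f(ξ) + κξ| ≤ κβ` for all `ξ ∈ [-β, β]`. -/
theorem stabilized_nonlinearity_bound (β : ℝ) (hβ : 0 < β)
    (f f' : ℝ → ℝ)
    (hderiv : ∀ ξ ∈ Set.Icc (-β) β,
      HasDerivWithinAt f (f' ξ) (Set.Icc (-β) β) ξ)
    (hf'cont : ContinuousOn f' (Set.Icc (-β) β))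
    (hfβ : f β ≤ 0) (hfmβ : 0 ≤ f (-β))
    (κ : ℝ) (hκ : ∀ ξ ∈ Set.Icc (-β) β, |f' ξ| ≤ κ) :
    ∀ ξ ∈ Set.Icc (-β) β, |f ξ + κ * ξ| ≤ κ * β :=
  stabilized_nonlinearity_bound_general β f f' hderiv hfβ hfmβ κ hκ
end

section
/- Let β > 0 and let f : ℝ → ℝ be continuously differentiable on [-β, β] with f(β) ≤ 0 ≤ f(-β), and let κ ≥ max_{ξ ∈ [-β,β]} |f'(ξ)|. Let τ > 0, g > 0, and let φ ∈ ℝ^M satisfy ‖φ‖_∞ ≤ β, where ‖u‖_∞ = max_i |u_i|. Then the vector v ∈ ℝ^M with components v_i = (1/τ) φ_i + g (f(φ_i) + κ φ_i) satisfies ‖v‖_∞ ≤ (1/τ + κ g) β. -/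
/-! The stabilized nonlinearity `x ↦ f x + κ x` has derivative `f' + κ ≥ 0` on `[-β, β]`, so it is
monotone there and is squeezed between `f (-β) - κβ ≥ -κβ` and `f β + κβ ≤ κβ`. Each component of
the vector is then bounded by `|φ_i| / τ + g κ β ≤ (1/τ + κ g) β`. -/

open Set

theorem monotoneOn_add_const_mul_of_hasDerivWithinAt {D : Set ℝ} (hD : Convex ℝ D)
    {f f' : ℝ → ℝ} {κ : ℝ} (hf : ∀ x ∈ D, HasDerivWithinAt f (f' x) D x)
    (hf' : ∀ x ∈ D, -κ ≤ f' x) :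
    MonotoneOn (fun x => f x + κ * x) D := by
  have hderiv : ∀ x ∈ D, HasDerivWithinAt (fun x => f x + κ * x) (f' x + κ) D x := fun x hx =>
    (hf x hx).add (by simpa using (hasDerivWithinAt_id x D).const_mul κ)
  refine monotoneOn_of_hasDerivWithinAt_nonneg hD
    (fun x hx => (hderiv x hx).continuousWithinAt)
    (fun x hx => (hderiv x (interior_subset hx)).mono interior_subset)
    (fun x hx => ?_)
  linarith [hf' x (interior_subset hx)]

theorem MonotoneOn.abs_le_of_mem_Icc {h : ℝ → ℝ} {a b c x : ℝ} (hmono : MonotoneOn h (Icc a b))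
    (ha : -c ≤ h a) (hb : h b ≤ c) (hx : x ∈ Icc a b) : |h x| ≤ c := by
  have hab : a ≤ b := hx.1.trans hx.2
  rw [abs_le]
  exact ⟨ha.trans (hmono (left_mem_Icc.2 hab) hx hx.1),
    (hmono hx (right_mem_Icc.2 hab) hx.2).trans hb⟩

theorem sESAV1_rhs_sup_norm_bound_general {M : ℕ} (β : ℝ)
    (f f' : ℝ → ℝ)
    (hderiv : ∀ ξ ∈ Set.Icc (-β) β,
      HasDerivWithinAt f (f' ξ) (Set.Icc (-β) β) ξ)
    (hfβ : f β ≤ 0) (hfmβ : 0 ≤ f (-β))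
    (κ : ℝ) (hκ : ∀ ξ ∈ Set.Icc (-β) β, |f' ξ| ≤ κ)
    (τ g : ℝ) (hτ : 0 < τ) (hg : 0 < g)
    (φ : Fin M → ℝ) (hφ : ‖φ‖ ≤ β) :
    ‖(fun i => (1 / τ) * φ i + g * (f (φ i) + κ * φ i) : Fin M → ℝ)‖ ≤
      (1 / τ + κ * g) * β := by
  have hβ : 0 ≤ β := (norm_nonneg φ).trans hφ
  have hκ0 : 0 ≤ κ := (abs_nonneg _).trans (hκ β (right_mem_Icc.2 (by linarith)))
  have hmono : MonotoneOn (fun x => f x + κ * x) (Icc (-β) β) :=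
    monotoneOn_add_const_mul_of_hasDerivWithinAt (convex_Icc _ _) hderiv
      fun x hx => (abs_le.1 (hκ x hx)).1
  rw [pi_norm_le_iff_of_nonneg (by positivity)]
  intro i
  have hφi : |φ i| ≤ β := (norm_le_pi_norm φ i).trans hφ
  have hstab : |f (φ i) + κ * φ i| ≤ κ * β :=
    hmono.abs_le_of_mem_Icc (by linarith) (by linarith) (abs_le.1 hφi)
  calc ‖(1 / τ) * φ i + g * (f (φ i) + κ * φ i)‖
      ≤ (1 / τ) * |φ i| + g * |f (φ i) + κ * φ i| := by
        rw [Real.norm_eq_abs]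
        refine (abs_add_le _ _).trans_eq ?_
        rw [abs_mul, abs_mul, abs_of_pos (one_div_pos.2 hτ), abs_of_pos hg]
    _ ≤ (1 / τ) * β + g * (κ * β) := by gcongr
    _ = (1 / τ + κ * g) * β := by ring

/-- right-hand-side bound of the sESAV1 scheme. If `‖φ‖_∞ ≤ β`
then the vector with components `(1/τ)φ_i + g(f(φ_i) + κφ_i)` has sup-norm at
most `(1/τ + κg)β`.  Here `‖·‖` on `Fin M → ℝ` is the sup-norm. -/
theorem sESAV1_rhs_sup_norm_bound {M : ℕ} (β : ℝ) (hβ : 0 < β)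
    (f f' : ℝ → ℝ)
    (hderiv : ∀ ξ ∈ Set.Icc (-β) β,
      HasDerivWithinAt f (f' ξ) (Set.Icc (-β) β) ξ)
    (hf'cont : ContinuousOn f' (Set.Icc (-β) β))
    (hfβ : f β ≤ 0) (hfmβ : 0 ≤ f (-β))
    (κ : ℝ) (hκ : ∀ ξ ∈ Set.Icc (-β) β, |f' ξ| ≤ κ)
    (τ g : ℝ) (hτ : 0 < τ) (hg : 0 < g)
    (φ : Fin M → ℝ) (hφ : ‖φ‖ ≤ β) :
    ‖(fun i => (1 / τ) * φ i + g * (f (φ i) + κ * φ i) : Fin M → ℝ)‖ ≤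
      (1 / τ + κ * g) * β :=
  sESAV1_rhs_sup_norm_bound_general β f f' hderiv hfβ hfmβ κ hκ τ g hτ hg φ hφ
end

section
/- (Energy dissipation of sESAV1.) Let L : Matrix (Fin M) (Fin M) ℝ be symmetric and positive semi-definite, w > 0 a weight, ⟨u,v⟩ = w ∑_i u_i v_i the discrete inner product with norm ‖u‖ = √⟨u,u⟩, F : ℝ → ℝ, f = -F', ε ∈ ℝ, τ > 0 and κ ≥ 0. Given φⁿ ∈ ℝ^M and sⁿ ∈ ℝ, set E₁h(ω) = w ∑_i F(ω_i) and g = exp(sⁿ)/exp(E₁h(φⁿ)), and suppose φⁿ⁺¹ ∈ ℝ^M and sⁿ⁺¹ ∈ ℝ satisfy the sESAV1 scheme: (φⁿ⁺¹ - φⁿ)/τ = -ε²(L φⁿ⁺¹) + g f(φⁿ) - κ g (φⁿ⁺¹ - φⁿ) componentwise (f applied componentwise), and (sⁿ⁺¹ - sⁿ)/τ = -g ⟨f(φⁿ), (φⁿ⁺¹ - φⁿ)/τ⟩. Then the modified discrete energy Ē_h(φ,s) = (ε²/2)⟨Lφ, φ⟩ + s satisfies Ē_h(φⁿ⁺¹,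 sⁿ⁺¹) ≤ Ē_h(φⁿ, sⁿ). -/
open Matrix

/-!
Testing the φ-equation of the scheme against the increment `e = φⁿ⁺¹ - φⁿ` and using the
`s`-equation, the nonlinear contributions `g ⟨f(φⁿ), e⟩` cancel exactly; with the polarization
identity `⟨Lφⁿ⁺¹,φⁿ⁺¹⟩ - ⟨Lφⁿ,φⁿ⟩ = 2⟨Lφⁿ⁺¹,e⟩ - ⟨Le,e⟩` this leaves
`Ē_h(φⁿ⁺¹,sⁿ⁺¹) - Ē_h(φⁿ,sⁿ) = -‖e‖²/τ - κ g ‖e‖² - (ε²/2)⟨Le,e⟩`,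
and each term is nonpositive because `g ≥ 0`, `κ ≥ 0` and `L` is positive semidefinite.
-/

namespace Matrix

variable {ι R : Type*} [Fintype ι] [CommRing R]

theorem mulVec_dotProduct_self_sub_mulVec_dotProduct_self {L : Matrix ι ι R} (hL : Lᵀ = L)
    (x y : ι → R) :
    L *ᵥ x ⬝ᵥ x - L *ᵥ y ⬝ᵥ y = 2 * (L *ᵥ x ⬝ᵥ (x - y)) - L *ᵥ (x - y) ⬝ᵥ (x - y) := by
  have hsymm : L *ᵥ y ⬝ᵥ x = L *ᵥ x ⬝ᵥ y := by
    rw [dotProduct_comm, dotProduct_mulVec, ← mulVec_transpose, hL]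
  rw [mulVec_sub, sub_dotProduct, dotProduct_sub, dotProduct_sub, hsymm]
  ring

end Matrix

section SchemeStep

variable {ι : Type*} [Fintype ι] {L : Matrix ι ι ℝ} {f : ι → ℝ} {w ε τ κ g : ℝ}
  {φ₀ φ₁ : ι → ℝ} {s₀ s₁ : ℝ}

theorem increment_dotProduct_eq_of_scheme
    (hφ : ∀ i, (φ₁ i - φ₀ i) / τ = -(ε ^ 2) * (L *ᵥ φ₁) i + g * f i - κ * g * (φ₁ i - φ₀ i)) :
    (φ₁ - φ₀) ⬝ᵥ (φ₁ - φ₀) / τ =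
      -(ε ^ 2) * (L *ᵥ φ₁ ⬝ᵥ (φ₁ - φ₀)) + g * (f ⬝ᵥ (φ₁ - φ₀))
        - κ * g * ((φ₁ - φ₀) ⬝ᵥ (φ₁ - φ₀)) := by
  simp only [dotProduct, Finset.sum_div, Finset.mul_sum, ← Finset.sum_sub_distrib,
    ← Finset.sum_add_distrib]
  refine Finset.sum_congr rfl fun i _ => ?_
  simp only [Pi.sub_apply]
  linear_combination (φ₁ i - φ₀ i) * hφ i

theorem auxiliary_increment_eq_of_scheme (hτ : τ ≠ 0)
    (hs : (s₁ - s₀) / τ = -g * (w * ∑ i, f i * ((φ₁ i - φ₀ i) / τ))) :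
    s₁ - s₀ = -g * (w * (f ⬝ᵥ (φ₁ - φ₀))) := by
  have hsum : ∑ i, f i * ((φ₁ i - φ₀ i) / τ) = f ⬝ᵥ (φ₁ - φ₀) / τ := by
    simp only [dotProduct, Finset.sum_div, Pi.sub_apply, mul_div_assoc]
  rw [hsum] at hs
  field_simp at hs
  linear_combination hs

theorem modifiedEnergy_sub_eq_of_scheme (hL : Lᵀ = L) (hτ : τ ≠ 0)
    (hφ : ∀ i, (φ₁ i - φ₀ i) / τ = -(ε ^ 2) * (L *ᵥ φ₁) i + g * f i - κ * g * (φ₁ i - φ₀ i))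
    (hs : (s₁ - s₀) / τ = -g * (w * ∑ i, f i * ((φ₁ i - φ₀ i) / τ))) :
    (ε ^ 2 / 2 * (w * (L *ᵥ φ₁ ⬝ᵥ φ₁)) + s₁) - (ε ^ 2 / 2 * (w * (L *ᵥ φ₀ ⬝ᵥ φ₀)) + s₀) =
      -(w * ((φ₁ - φ₀) ⬝ᵥ (φ₁ - φ₀) / τ)) - w * (κ * g * ((φ₁ - φ₀) ⬝ᵥ (φ₁ - φ₀)))
        - ε ^ 2 / 2 * (w * (L *ᵥ (φ₁ - φ₀) ⬝ᵥ (φ₁ - φ₀))) := by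
  linear_combination (ε ^ 2 / 2 * w) * mulVec_dotProduct_self_sub_mulVec_dotProduct_self hL φ₁ φ₀
    + auxiliary_increment_eq_of_scheme hτ hs
    + w * increment_dotProduct_eq_of_scheme hφ

theorem modifiedEnergy_le_of_scheme (hL : L.PosSemidef) (hw : 0 ≤ w)
    (hτ : 0 < τ) (hκ : 0 ≤ κ) (hg : 0 ≤ g)
    (hφ : ∀ i, (φ₁ i - φ₀ i) / τ = -(ε ^ 2) * (L *ᵥ φ₁) i + g * f i - κ * g * (φ₁ i - φ₀ i))
    (hs : (s₁ - s₀) / τ = -g * (w * ∑ i, f i * ((φ₁ i - φ₀ i) / τ))) :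
    ε ^ 2 / 2 * (w * (L *ᵥ φ₁ ⬝ᵥ φ₁)) + s₁ ≤ ε ^ 2 / 2 * (w * (L *ᵥ φ₀ ⬝ᵥ φ₀)) + s₀ := by
  have hsymm : Lᵀ = L := by
    simpa [conjTranspose_eq_transpose_of_trivial] using hL.isHermitian.eq
  have hidentity := modifiedEnergy_sub_eq_of_scheme hsymm hτ.ne' hφ hs
  have hsq : 0 ≤ (φ₁ - φ₀) ⬝ᵥ (φ₁ - φ₀) := dotProduct_self_star_nonneg _
  have hquad : 0 ≤ L *ᵥ (φ₁ - φ₀) ⬝ᵥ (φ₁ - φ₀) := by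
    simpa [dotProduct_comm] using hL.dotProduct_mulVec_nonneg (φ₁ - φ₀)
  have : 0 ≤ w * ((φ₁ - φ₀) ⬝ᵥ (φ₁ - φ₀) / τ) := by positivity
  have : 0 ≤ w * (κ * g * ((φ₁ - φ₀) ⬝ᵥ (φ₁ - φ₀))) := by positivity
  have : 0 ≤ ε ^ 2 / 2 * (w * (L *ᵥ (φ₁ - φ₀) ⬝ᵥ (φ₁ - φ₀))) := by positivity
  linarith

end SchemeStep

/-- Energy dissipation of sESAV1: the first-order sESAV scheme
is unconditionally energy stable with respect to the modified discrete energy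
`Ē_h(φ,s) = (ε²/2)⟨Lφ,φ⟩ + s`, where `⟨u,v⟩ = w ∑_i u_i v_i` and `f = -F'`. -/
theorem sESAV1_energy_dissipation {M : ℕ}
    (L : Matrix (Fin M) (Fin M) ℝ) (hL : L.PosSemidef)
    (w : ℝ) (hw : 0 < w)
    (F : ℝ → ℝ) (ε τ κ : ℝ) (hτ : 0 < τ) (hκ : 0 ≤ κ)
    (φn φn1 : Fin M → ℝ) (sn sn1 : ℝ) (g : ℝ)
    (hg : g = Real.exp sn / Real.exp (w * ∑ i, F (φn i)))
    (hscheme : ∀ i, (φn1 i - φn i) / τ =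
      -(ε ^ 2) * L.mulVec φn1 i + g * (-(deriv F (φn i)))
        - κ * g * (φn1 i - φn i))
    (hsscheme : (sn1 - sn) / τ =
      -g * (w * ∑ i, (-(deriv F (φn i))) * ((φn1 i - φn i) / τ))) :
    ε ^ 2 / 2 * (w * ∑ i, L.mulVec φn1 i * φn1 i) + sn1 ≤
      ε ^ 2 / 2 * (w * ∑ i, L.mulVec φn i * φn i) + sn := by
  have hg_nonneg : 0 ≤ g := by rw [hg]; positivity
  exact modifiedEnergy_le_of_scheme hL hw.le hτ hκ hg_nonneg hscheme hsscheme
end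

section
/- (MBP of sESAV1, one step.) Let L : Matrix (Fin M) (Fin M) ℝ satisfy the nonlocal-stiffness sign structure: L i i ≥ 0 for all i, L i j ≤ 0 for all i ≠ j, and -L i i = ∑_{j ≠ i} L i j for all i. Let β > 0, f : ℝ → ℝ continuously differentiable on [-β,β] with f(β) ≤ 0 ≤ f(-β), κ ≥ max_{ξ∈[-β,β]} |f'(ξ)|, τ > 0, g > 0 and ε ∈ ℝ. If φⁿ ∈ ℝ^M satisfies ‖φⁿ‖_∞ ≤ β and φⁿ⁺¹ ∈ ℝ^M satisfies ((1/τ + κ g)•I + ε²•L) φⁿ⁺¹ = (1/τ + κ g) φⁿ + g f(φⁿ), with f applied componentwise, then ‖φⁿ⁺¹‖_∞ ≤ β. -/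
open Matrix

/-- MBP of sESAV1, one step: if `L` has the nonlocal-stiffness
sign structure, `κ ≥ max_{[-β,β]} |f'|`, `‖φⁿ‖_∞ ≤ β` and `φⁿ⁺¹` solves the
sESAV1 update `((1/τ + κg)I + ε²L)φⁿ⁺¹ = (1/τ + κg)φⁿ + g f(φⁿ)`, then
`‖φⁿ⁺¹‖_∞ ≤ β`.  Here `‖·‖` on `Fin M → ℝ` is the sup-norm. -/
theorem sESAV1_MBP_one_step {M : ℕ} (L : Matrix (Fin M) (Fin M) ℝ)
    (hdiag : ∀ i, 0 ≤ L i i)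
    (hoff : ∀ i j, i ≠ j → L i j ≤ 0)
    (hrow : ∀ i, -L i i = ∑ j ∈ Finset.univ.erase i, L i j)
    (β : ℝ) (hβ : 0 < β)
    (f f' : ℝ → ℝ)
    (hderiv : ∀ ξ ∈ Set.Icc (-β) β,
      HasDerivWithinAt f (f' ξ) (Set.Icc (-β) β) ξ)
    (hf'cont : ContinuousOn f' (Set.Icc (-β) β))
    (hfβ : f β ≤ 0) (hfmβ : 0 ≤ f (-β))
    (κ : ℝ) (hκ : ∀ ξ ∈ Set.Icc (-β) β, |f' ξ| ≤ κ)
    (τ g ε : ℝ) (hτ : 0 < τ) (hg : 0 < g)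
    (φn φn1 : Fin M → ℝ) (hφn : ‖φn‖ ≤ β)
    (hupdate :
      ((1 / τ + κ * g) • (1 : Matrix (Fin M) (Fin M) ℝ) + ε ^ 2 • L).mulVec φn1
        = fun i => (1 / τ + κ * g) * φn i + g * f (φn i)) :
    ‖φn1‖ ≤ β := by
  rw [pi_norm_le_iff_of_nonneg hβ.le]
  intro i
  obtain ⟨i₀, -, hmax⟩ := Finset.exists_max_image Finset.univ (fun j => |φn1 j|)
    ⟨i, Finset.mem_univ i⟩
  have hmax' : ∀ j, |φn1 j| ≤ |φn1 i₀| := fun j => hmax j (Finset.mem_univ j)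
  have hκ0 : 0 ≤ κ := le_trans (abs_nonneg _) (hκ 0 ⟨by linarith, hβ.le⟩)
  have hc : 0 < 1 / τ + κ * g := by positivity
  have hφmem : ∀ j, φn j ∈ Set.Icc (-β) β := by
    intro j
    have := (pi_norm_le_iff_of_nonneg hβ.le).mp hφn j
    rw [Real.norm_eq_abs, abs_le] at this
    exact ⟨this.1, this.2⟩
  have hlip : ∀ x ∈ Set.Icc (-β) β, ∀ y ∈ Set.Icc (-β) β, |f y - f x| ≤ κ * |y - x| := by
    intro x hx y hy
    have := (convex_Icc (-β) β).norm_image_sub_le_of_norm_hasDerivWithin_le hderiv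
      (fun ξ hξ => by simpa [Real.norm_eq_abs] using hκ ξ hξ) hx hy
    simpa [Real.norm_eq_abs] using this
  have hrowEq : (1/τ + κ*g) * φn1 i₀ + ε^2 * ∑ j, L i₀ j * φn1 j
      = (1/τ + κ*g) * φn i₀ + g * f (φn i₀) := by
    have := congrFun hupdate i₀
    simp only [mulVec, dotProduct, Matrix.add_apply, Matrix.smul_apply, Matrix.one_apply,
      smul_eq_mul, add_mul, Finset.sum_add_distrib, mul_ite, mul_one, mul_zero, ite_mul,
      zero_mul, Finset.sum_ite_eq, Finset.mem_univ, if_true, Finset.mul_sum, mul_assoc] at this ⊢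
    exact this
  have hsplit := Finset.add_sum_erase Finset.univ (fun j => L i₀ j * φn1 j) (Finset.mem_univ i₀)
  have hβmem : β ∈ Set.Icc (-β) β := ⟨by linarith, le_refl β⟩
  have hmβmem : -β ∈ Set.Icc (-β) β := ⟨le_refl _, by linarith⟩
  have hx1 := (hφmem i₀).1
  have hx2 := (hφmem i₀).2
  suffices h : |φn1 i₀| ≤ β by
    exact le_trans (by simpa [Real.norm_eq_abs] using hmax' i) h
  rcases le_or_gt 0 (φn1 i₀) with hpos | hneg
  · -- upper bound
    have hupper : ∀ j, φn1 j ≤ φn1 i₀ := fun j => by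
      have := hmax' j
      rw [abs_of_nonneg hpos] at this
      linarith [le_abs_self (φn1 j)]
    have hge : ∑ j ∈ Finset.univ.erase i₀, L i₀ j * φn1 i₀
        ≤ ∑ j ∈ Finset.univ.erase i₀, L i₀ j * φn1 j :=
      Finset.sum_le_sum fun j hj =>
        mul_le_mul_of_nonpos_left (hupper j) (hoff i₀ j (Finset.ne_of_mem_erase hj).symm)
    have hsum : ∑ j ∈ Finset.univ.erase i₀, L i₀ j * φn1 i₀ = (-L i₀ i₀) * φn1 i₀ := by
      rw [← Finset.sum_mul, ← hrow i₀]
    have hS : 0 ≤ ∑ j, L i₀ j * φn1 j := by linarith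
    have h1 : f (φn i₀) - f β ≤ κ * (β - φn i₀) := by
      have h := hlip β hβmem (φn i₀) (hφmem i₀)
      rw [show |φn i₀ - β| = β - φn i₀ by rw [abs_of_nonpos (by linarith)]; ring] at h
      linarith [(abs_le.mp h).2]
    have h3 : g * (f (φn i₀) - f β) ≤ g * (κ * (β - φn i₀)) :=
      mul_le_mul_of_nonneg_left h1 hg.le
    have h4 : g * f β ≤ 0 := mul_nonpos_of_nonneg_of_nonpos hg.le hfβ
    have h5 : 0 ≤ (1/τ) * (β - φn i₀) := mul_nonneg (by positivity) (by linarith)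
    have hkey : (1/τ + κ*g) * φn i₀ + g * f (φn i₀) ≤ (1/τ + κ*g) * β := by nlinarith
    have hεS : 0 ≤ ε^2 * ∑ j, L i₀ j * φn1 j := mul_nonneg (sq_nonneg ε) hS
    have hfin : (1/τ + κ*g) * φn1 i₀ ≤ (1/τ + κ*g) * β := by linarith
    rw [abs_of_nonneg hpos]
    exact le_of_mul_le_mul_left hfin hc
  · -- lower bound
    have hlower : ∀ j, φn1 i₀ ≤ φn1 j := fun j => by
      have := hmax' j
      rw [abs_of_neg hneg] at this
      linarith [neg_abs_le (φn1 j)]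
    have hge : ∑ j ∈ Finset.univ.erase i₀, L i₀ j * φn1 j
        ≤ ∑ j ∈ Finset.univ.erase i₀, L i₀ j * φn1 i₀ :=
      Finset.sum_le_sum fun j hj =>
        mul_le_mul_of_nonpos_left (hlower j) (hoff i₀ j (Finset.ne_of_mem_erase hj).symm)
    have hsum : ∑ j ∈ Finset.univ.erase i₀, L i₀ j * φn1 i₀ = (-L i₀ i₀) * φn1 i₀ := by
      rw [← Finset.sum_mul, ← hrow i₀]
    have hS : ∑ j, L i₀ j * φn1 j ≤ 0 := by linarith
    have h1 : f (-β) - f (φn i₀) ≤ κ * (φn i₀ + β) := by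
      have h := hlip (φn i₀) (hφmem i₀) (-β) hmβmem
      rw [show |(-β) - φn i₀| = φn i₀ + β by rw [abs_of_nonpos (by linarith)]; ring] at h
      linarith [(abs_le.mp h).2]
    have h3 : g * (f (-β) - f (φn i₀)) ≤ g * (κ * (φn i₀ + β)) :=
      mul_le_mul_of_nonneg_left h1 hg.le
    have h4 : 0 ≤ g * f (-β) := mul_nonneg hg.le hfmβ
    have h5 : 0 ≤ (1/τ) * (φn i₀ + β) := mul_nonneg (by positivity) (by linarith)
    have hkey : (1/τ + κ*g) * (-β) ≤ (1/τ + κ*g) * φn i₀ + g * f (φn i₀) := by nlinarith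
    have hεS : ε^2 * ∑ j, L i₀ j * φn1 j ≤ 0 :=
      mul_nonpos_of_nonneg_of_nonpos (sq_nonneg ε) hS
    have hfin : (1/τ + κ*g) * (-β) ≤ (1/τ + κ*g) * φn1 i₀ := by linarith
    rw [abs_of_neg hneg]
    linarith [le_of_mul_le_mul_left hfin hc]
end

section
/- (MBP of sESAV1, full trajectory.) Let L : Matrix (Fin M) (Fin M) ℝ satisfy the nonlocal-stiffness sign structure: L i i ≥ 0 for all i, L i j ≤ 0 for all i ≠ j, and -L i i = ∑_{j ≠ i} L i j for all i. Let β > 0, f : ℝ → ℝ continuously differentiable on [-β,β] with f(β) ≤ 0 ≤ f(-β), κ ≥ max_{ξ∈[-β,β]} |f'(ξ)|, τ > 0 and ε ∈ ℝ. Let (φⁿ)_{n≥0} be a sequence in ℝ^M and (gⁿ)_{n≥0} a sequence of positive reals such that for every n, ((1/τ + κ gⁿ)•I + ε²•L) φⁿ⁺¹ = (1/τ + κ gⁿ) φⁿ + gⁿ f(φⁿ) with f applied componentwise. If ‖φ⁰‖_∞ ≤ β, then ‖φⁿ‖_∞ ≤ β for all n ≥ 0. -/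
/-!
One step of the scheme reads `(c • 1 + ε² • L) φⁿ⁺¹ = c φⁿ + gⁿ f(φⁿ)` with
`c = 1/τ + κ gⁿ`. At a coordinate `i` where `|φⁿ⁺¹ᵢ|` is maximal, the sign structure
of `L` gives `φⁿ⁺¹ᵢ (L φⁿ⁺¹)ᵢ ≥ 0`, so `c ‖φⁿ⁺¹‖_∞ ≤ ‖c φⁿ + gⁿ f(φⁿ)‖_∞`.
Since `|f'| ≤ κ`, the map `x ↦ κ x + f x` is nondecreasing on `[-β, β]`, hence so is
`x ↦ c x + gⁿ f x`, which therefore maps `[-β, β]` into `[-c β, c β]` by the sign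
conditions on `f(±β)`.
-/

open Matrix Set

theorem monotoneOn_mul_add_of_abs_hasDerivWithinAt_le {f f' : ℝ → ℝ} {s : Set ℝ} {κ : ℝ}
    (hs : Convex ℝ s) (hderiv : ∀ x ∈ s, HasDerivWithinAt f (f' x) s x)
    (hκ : ∀ x ∈ s, |f' x| ≤ κ) :
    MonotoneOn (fun x => κ * x + f x) s := by
  intro x hx y hy hxy
  have hlip : |f y - f x| ≤ κ * |y - x| :=
    Convex.norm_image_sub_le_of_norm_hasDerivWithin_le hderiv hκ hs hx hy
  rw [abs_of_nonneg (sub_nonneg.2 hxy)] at hlip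
  linarith [neg_abs_le (f y - f x)]

theorem abs_mul_add_mul_le_of_monotoneOn {f : ℝ → ℝ} {β κ c g x : ℝ}
    (hmono : MonotoneOn (fun x => κ * x + f x) (Icc (-β) β))
    (hfβ : f β ≤ 0) (hfmβ : 0 ≤ f (-β)) (hg : 0 ≤ g) (hc : κ * g ≤ c) (hx : |x| ≤ β) :
    |c * x + g * f x| ≤ c * β := by
  have hxβ : x ∈ Icc (-β) β := abs_le.mp hx
  have hβ : 0 ≤ β := (abs_nonneg x).trans hx
  have hlo : κ * -β + f (-β) ≤ κ * x + f x :=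
    hmono ⟨le_rfl, by linarith⟩ hxβ hxβ.1
  have hhi : κ * x + f x ≤ κ * β + f β :=
    hmono hxβ ⟨by linarith, le_rfl⟩ hxβ.2
  -- `c x + g f x = (c - κ g) x + g (κ x + f x)`, a sum of two nondecreasing terms
  rw [abs_le]
  constructor
  · nlinarith [mul_le_mul_of_nonneg_left hlo hg, mul_nonneg hg hfmβ,
      mul_nonneg (sub_nonneg.2 hc) (show 0 ≤ x + β by linarith [hxβ.1])]
  · nlinarith [mul_le_mul_of_nonneg_left hhi hg, mul_nonpos_of_nonneg_of_nonpos hg hfβ,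
      mul_nonneg (sub_nonneg.2 hc) (show 0 ≤ β - x by linarith [hxβ.2])]

section SignStructure

variable {ι : Type*} [Fintype ι] {L : Matrix ι ι ℝ}

theorem mul_mulVec_apply_nonneg_of_abs_le (hoff : ∀ i j, i ≠ j → L i j ≤ 0)
    (hrow : ∀ i, 0 ≤ ∑ j, L i j) {v : ι → ℝ} {i : ι} (hmax : ∀ j, |v j| ≤ |v i|) :
    0 ≤ v i * (L *ᵥ v) i := by
  have hterm : ∀ j, L i j * v i ^ 2 ≤ L i j * (v i * v j) := by
    intro j
    rcases eq_or_ne i j with rfl | hij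
    · rw [sq]
    · refine mul_le_mul_of_nonpos_left ?_ (hoff i j hij)
      calc v i * v j ≤ |v i| * |v j| := by rw [← abs_mul]; exact le_abs_self _
        _ ≤ |v i| * |v i| := mul_le_mul_of_nonneg_left (hmax j) (abs_nonneg _)
        _ = v i ^ 2 := by rw [← sq, sq_abs]
  calc 0 ≤ (∑ j, L i j) * v i ^ 2 := mul_nonneg (hrow i) (sq_nonneg _)
    _ ≤ ∑ j, L i j * (v i * v j) := by
      rw [Finset.sum_mul]
      exact Finset.sum_le_sum fun j _ => hterm j
    _ = v i * (L *ᵥ v) i := by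
      rw [mulVec, dotProduct, Finset.mul_sum]
      exact Finset.sum_congr rfl fun j _ => by ring

theorem mul_norm_le_norm_smul_one_add_smul_mulVec [DecidableEq ι]
    (hoff : ∀ i j, i ≠ j → L i j ≤ 0) (hrow : ∀ i, 0 ≤ ∑ j, L i j) (c : ℝ) {d : ℝ} (hd : 0 ≤ d) (v : ι → ℝ) :
    c * ‖v‖ ≤ ‖(c • (1 : Matrix ι ι ℝ) + d • L) *ᵥ v‖ := by
  rcases isEmpty_or_nonempty ι with _ | _
  · simp [Subsingleton.elim v 0]
  obtain ⟨i, -, hmax⟩ :=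
    Finset.univ.exists_max_image (fun j => |v j|) Finset.univ_nonempty
  replace hmax : ∀ j, |v j| ≤ |v i| := fun j => hmax j (Finset.mem_univ j)
  have hnorm : ‖v‖ = |v i| :=
    le_antisymm ((pi_norm_le_iff_of_nonneg (abs_nonneg _)).2 hmax) (norm_le_pi_norm v i)
  set w := (c • (1 : Matrix ι ι ℝ) + d • L) *ᵥ v
  have hwi : w i = c * v i + d * (L *ᵥ v) i := by
    simp only [w, add_mulVec, smul_mulVec, one_mulVec, Pi.add_apply, Pi.smul_apply,
      smul_eq_mul]
  have hsq : c * |v i| * |v i| ≤ |w i| * |v i| :=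
    calc c * |v i| * |v i| = c * v i ^ 2 := by rw [mul_assoc, ← sq, sq_abs]
      _ ≤ v i * w i := by
        rw [hwi]
        nlinarith [mul_nonneg hd (mul_mulVec_apply_nonneg_of_abs_le hoff hrow hmax)]
      _ ≤ |w i| * |v i| := by rw [mul_comm, ← abs_mul]; exact le_abs_self _
  rw [hnorm]
  rcases (abs_nonneg (v i)).eq_or_lt with hzero | hpos
  · rw [← hzero, mul_zero]; exact norm_nonneg w
  · exact (le_of_mul_le_mul_right hsq hpos).trans (norm_le_pi_norm w i)

end SignStructure

theorem sESAV1_MBP_trajectory_general {M : ℕ} (L : Matrix (Fin M) (Fin M) ℝ)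
    (hoff : ∀ i j, i ≠ j → L i j ≤ 0)
    (hrow : ∀ i, -L i i = ∑ j ∈ Finset.univ.erase i, L i j)
    (β : ℝ)
    (f f' : ℝ → ℝ)
    (hderiv : ∀ ξ ∈ Set.Icc (-β) β,
      HasDerivWithinAt f (f' ξ) (Set.Icc (-β) β) ξ)
    (hfβ : f β ≤ 0) (hfmβ : 0 ≤ f (-β))
    (κ : ℝ) (hκ : ∀ ξ ∈ Set.Icc (-β) β, |f' ξ| ≤ κ)
    (τ ε : ℝ) (hτ : 0 < τ)
    (φ : ℕ → Fin M → ℝ) (g : ℕ → ℝ) (hg : ∀ n, 0 < g n)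
    (hupdate : ∀ n,
      ((1 / τ + κ * g n) • (1 : Matrix (Fin M) (Fin M) ℝ) + ε ^ 2 • L).mulVec
          (φ (n + 1))
        = fun i => (1 / τ + κ * g n) * φ n i + g n * f (φ n i))
    (hφ0 : ‖φ 0‖ ≤ β) :
    ∀ n, ‖φ n‖ ≤ β := by
  have hβ : 0 ≤ β := (norm_nonneg _).trans hφ0
  have hκ0 : 0 ≤ κ := (abs_nonneg _).trans (hκ β ⟨by linarith, le_rfl⟩)
  have hrowsum : ∀ i, 0 ≤ ∑ j, L i j := fun i => by
    rw [← Finset.add_sum_erase _ _ (Finset.mem_univ i), ← hrow i, add_neg_cancel]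
  have hmono := monotoneOn_mul_add_of_abs_hasDerivWithinAt_le (convex_Icc (-β) β) hderiv hκ
  intro n
  induction n with
  | zero => exact hφ0
  | succ n ih =>
    have hc : 0 < 1 / τ + κ * g n :=
      add_pos_of_pos_of_nonneg (one_div_pos.2 hτ) (mul_nonneg hκ0 (hg n).le)
    have hrhs : ‖fun i => (1 / τ + κ * g n) * φ n i + g n * f (φ n i)‖
        ≤ (1 / τ + κ * g n) * β :=
      (pi_norm_le_iff_of_nonneg (mul_nonneg hc.le hβ)).2 fun i =>
        abs_mul_add_mul_le_of_monotoneOn hmono hfβ hfmβ (hg n).le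
          (by linarith [one_div_pos.2 hτ]) ((norm_le_pi_norm (φ n) i).trans ih)
    have hstep := mul_norm_le_norm_smul_one_add_smul_mulVec hoff hrowsum
      (1 / τ + κ * g n) (sq_nonneg ε) (φ (n + 1))
    rw [hupdate n] at hstep
    exact le_of_mul_le_mul_left (hstep.trans hrhs) hc

/-- MBP of sESAV1, full trajectory: under the same hypotheses
on `L`, `f`, `κ`, if every step of the sESAV1 scheme holds with positive
scalar factors `gⁿ` and `‖φ⁰‖_∞ ≤ β`, then `‖φⁿ‖_∞ ≤ β` for all `n`. -/
theorem sESAV1_MBP_trajectory {M : ℕ} (L : Matrix (Fin M) (Fin M) ℝ)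
    (hdiag : ∀ i, 0 ≤ L i i)
    (hoff : ∀ i j, i ≠ j → L i j ≤ 0)
    (hrow : ∀ i, -L i i = ∑ j ∈ Finset.univ.erase i, L i j)
    (β : ℝ) (hβ : 0 < β)
    (f f' : ℝ → ℝ)
    (hderiv : ∀ ξ ∈ Set.Icc (-β) β,
      HasDerivWithinAt f (f' ξ) (Set.Icc (-β) β) ξ)
    (hf'cont : ContinuousOn f' (Set.Icc (-β) β))
    (hfβ : f β ≤ 0) (hfmβ : 0 ≤ f (-β))
    (κ : ℝ) (hκ : ∀ ξ ∈ Set.Icc (-β) β, |f' ξ| ≤ κ)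
    (τ ε : ℝ) (hτ : 0 < τ)
    (φ : ℕ → Fin M → ℝ) (g : ℕ → ℝ) (hg : ∀ n, 0 < g n)
    (hupdate : ∀ n,
      ((1 / τ + κ * g n) • (1 : Matrix (Fin M) (Fin M) ℝ) + ε ^ 2 • L).mulVec
          (φ (n + 1))
        = fun i => (1 / τ + κ * g n) * φ n i + g n * f (φ n i))
    (hφ0 : ‖φ 0‖ ≤ β) :
    ∀ n, ‖φ n‖ ≤ β :=
  sESAV1_MBP_trajectory_general L hoff hrow β f f' hderiv hfβ hfmβ κ hκ τ ε hτ φ g hg hupdate hφ0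
end

section
/- (Energy dissipation of sESAV2.) Let L : Matrix (Fin M) (Fin M) ℝ be symmetric and positive semi-definite, w > 0 a weight, ⟨u,v⟩ = w ∑_i u_i v_i the discrete inner product with norm ‖u‖ = √⟨u,u⟩, f : ℝ → ℝ, ε ∈ ℝ, τ > 0 and κ ≥ 0. Let φⁿ, φⁿ⁺¹, φ̄ ∈ ℝ^M, sⁿ, sⁿ⁺¹ ∈ ℝ and g > 0, set φ^{n+1/2} = (φⁿ⁺¹ + φⁿ)/2, and suppose the sESAV2 (Crank–Nicolson) scheme holds: (φⁿ⁺¹ - φⁿ)/τ = -ε² (L φ^{n+1/2}) + g f(φ̄) - κ g (φ^{n+1/2} - φ̄) componentwise (f applied componentwise), and (sⁿ⁺¹ - sⁿ)/τ = -g ⟨f(φ̄), (φⁿ⁺¹-φⁿ)/τ⟩ + κ g ⟨φ^{n+1/2} - φ̄, (φⁿ⁺¹-φⁿ)/τ⟩. Then the modified discrete energy Ē_h(φ,s) = (ε²/2)⟨Lφ, φ⟩ + s satisfies Ē_h(φⁿ⁺¹, sⁿ⁺¹) ≤ Ē_h(φⁿ, sⁿ). -/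
open Matrix

/-! Pairing the scheme with the increment `v = (φⁿ⁺¹ - φⁿ)/τ`: since `L` is symmetric, the
Crank–Nicolson midpoint turns `ε²⟨Lφ^{n+1/2}, φⁿ⁺¹ - φⁿ⟩` into the change of the quadratic part of
the energy, and the `s`-equation is built so that it cancels exactly the explicit terms
`g f(φ̄) - κ g (φ^{n+1/2} - φ̄)`. What remains is `Ē_h(φⁿ⁺¹, sⁿ⁺¹) - Ē_h(φⁿ, sⁿ) = -τ ‖v‖² ≤ 0`. -/

namespace Matrix

variable {ι R : Type*} [Fintype ι] [CommRing R] {A : Matrix ι ι R}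

theorem IsSymm.mulVec_dotProduct_comm (hA : A.IsSymm) (x y : ι → R) :
    A *ᵥ x ⬝ᵥ y = A *ᵥ y ⬝ᵥ x := by
  rw [dotProduct_comm, dotProduct_mulVec, ← mulVec_transpose, hA.eq]

theorem IsSymm.mulVec_dotProduct_self_sub (hA : A.IsSymm) (x y : ι → R) :
    A *ᵥ x ⬝ᵥ x - A *ᵥ y ⬝ᵥ y = A *ᵥ (x + y) ⬝ᵥ (x - y) := by
  rw [mulVec_add, add_dotProduct, dotProduct_sub, dotProduct_sub,
    hA.mulVec_dotProduct_comm y x]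
  ring

theorem IsSymm.crankNicolson_energy_identity (hA : A.IsSymm) {x₀ x₁ m v r : ι → R} {c τ : R}
    (hm : x₁ + x₀ = (2 : R) • m) (hv : x₁ - x₀ = τ • v) (hstep : v = -c • (A *ᵥ m) + r) :
    c * (A *ᵥ x₁ ⬝ᵥ x₁ - A *ᵥ x₀ ⬝ᵥ x₀) = 2 * τ * (r ⬝ᵥ v - v ⬝ᵥ v) := by
  have hr : r - v = c • (A *ᵥ m) := by rw [hstep, neg_smul]; abel
  rw [hA.mulVec_dotProduct_self_sub, hm, hv, ← sub_dotProduct, hr, mulVec_smul, smul_dotProduct,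
    dotProduct_smul, smul_dotProduct, smul_eq_mul, smul_eq_mul, smul_eq_mul]
  ring

end Matrix

theorem sESAV2_energy_dissipation_general {M : ℕ}
    (L : Matrix (Fin M) (Fin M) ℝ) (hL : L.PosSemidef)
    (w : ℝ) (hw : 0 < w)
    (f : ℝ → ℝ) (ε τ κ : ℝ) (hτ : 0 < τ)
    (φn φn1 φbar : Fin M → ℝ) (sn sn1 : ℝ) (g : ℝ)
    (hscheme : ∀ i, (φn1 i - φn i) / τ =
      -(ε ^ 2) * L.mulVec (fun k => (φn1 k + φn k) / 2) i
        + g * f (φbar i)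
        - κ * g * ((φn1 i + φn i) / 2 - φbar i))
    (hsscheme : (sn1 - sn) / τ =
      -g * (w * ∑ i, f (φbar i) * ((φn1 i - φn i) / τ))
        + κ * g *
          (w * ∑ i, ((φn1 i + φn i) / 2 - φbar i) * ((φn1 i - φn i) / τ))) :
    ε ^ 2 / 2 * (w * ∑ i, L.mulVec φn1 i * φn1 i) + sn1 ≤
      ε ^ 2 / 2 * (w * ∑ i, L.mulVec φn i * φn i) + sn := by
  set m : Fin M → ℝ := fun k => (φn1 k + φn k) / 2
  set v : Fin M → ℝ := fun i => (φn1 i - φn i) / τ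
  set r : Fin M → ℝ := fun i => g * f (φbar i) - κ * g * (m i - φbar i)
  have hm : φn1 + φn = (2 : ℝ) • m := by
    ext i; simp only [m, Pi.add_apply, Pi.smul_apply, smul_eq_mul]; ring
  have hv : φn1 - φn = τ • v := by
    ext i; simp only [v, Pi.sub_apply, Pi.smul_apply, smul_eq_mul]; field_simp
  have hstep : v = -(ε ^ 2) • (L *ᵥ m) + r := by
    ext i; simp only [v, hscheme i, Pi.add_apply, Pi.smul_apply, smul_eq_mul, r]; ring
  have hs : sn1 - sn = -(τ * w) * (r ⬝ᵥ v) := by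
    rw [div_eq_iff hτ.ne'] at hsscheme
    rw [hsscheme, dotProduct, Finset.mul_sum, Finset.mul_sum, Finset.mul_sum, Finset.mul_sum,
      ← Finset.sum_add_distrib, Finset.sum_mul, Finset.mul_sum]
    exact Finset.sum_congr rfl fun i _ => by simp only [r]; ring
  have henergy := (isHermitian_iff_isSymm.mp hL.isHermitian).crankNicolson_energy_identity
    hm hv hstep
  have hvv : 0 ≤ v ⬝ᵥ v := Fintype.sum_nonneg fun i => mul_self_nonneg (v i)
  change ε ^ 2 / 2 * (w * (L *ᵥ φn1 ⬝ᵥ φn1)) + sn1 ≤ ε ^ 2 / 2 * (w * (L *ᵥ φn ⬝ᵥ φn)) + sn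
  linear_combination (w / 2) * henergy + hs + mul_nonneg (mul_nonneg hτ.le hw.le) hvv

/-- Energy dissipation of sESAV2: the second-order
(Crank–Nicolson) sESAV scheme is unconditionally energy stable with respect to
the modified discrete energy `Ē_h(φ,s) = (ε²/2)⟨Lφ,φ⟩ + s`, where
`⟨u,v⟩ = w ∑_i u_i v_i`. -/
theorem sESAV2_energy_dissipation {M : ℕ}
    (L : Matrix (Fin M) (Fin M) ℝ) (hL : L.PosSemidef)
    (w : ℝ) (hw : 0 < w)
    (f : ℝ → ℝ) (ε τ κ : ℝ) (hτ : 0 < τ) (hκ : 0 ≤ κ)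
    (φn φn1 φbar : Fin M → ℝ) (sn sn1 : ℝ) (g : ℝ) (hg : 0 < g)
    (hscheme : ∀ i, (φn1 i - φn i) / τ =
      -(ε ^ 2) * L.mulVec (fun k => (φn1 k + φn k) / 2) i
        + g * f (φbar i)
        - κ * g * ((φn1 i + φn i) / 2 - φbar i))
    (hsscheme : (sn1 - sn) / τ =
      -g * (w * ∑ i, f (φbar i) * ((φn1 i - φn i) / τ))
        + κ * g *
          (w * ∑ i, ((φn1 i + φn i) / 2 - φbar i) * ((φn1 i - φn i) / τ))) :
    ε ^ 2 / 2 * (w * ∑ i, L.mulVec φn1 i * φn1 i) + sn1 ≤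
      ε ^ 2 / 2 * (w * ∑ i, L.mulVec φn i * φn i) + sn :=
  sESAV2_energy_dissipation_general L hL w hw f ε τ κ hτ φn φn1 φbar sn sn1 g hscheme hsscheme
end

section
/- (Exact energy decrease identity of sESAV2.) Let L : Matrix (Fin M) (Fin M) ℝ be symmetric, w > 0 a weight, ⟨u,v⟩ = w ∑_i u_i v_i the discrete inner product with norm ‖u‖ = √⟨u,u⟩, f : ℝ → ℝ, ε ∈ ℝ, τ > 0 and κ ≥ 0. Let φⁿ, φⁿ⁺¹, φ̄ ∈ ℝ^M, sⁿ, sⁿ⁺¹ ∈ ℝ and g ∈ ℝ, set φ^{n+1/2} = (φⁿ⁺¹ + φⁿ)/2, and suppose: (φⁿ⁺¹ - φⁿ)/τ = -ε² (L φ^{n+1/2}) + g f(φ̄) - κ g (φ^{n+1/2} - φ̄) componentwise, and (sⁿ⁺¹ - sⁿ)/τ = -g ⟨f(φ̄), (φⁿ⁺¹-φⁿ)/τ⟩ + κ g ⟨φ^{n+1/2} - φ̄, (φⁿ⁺¹-φⁿ)/τ⟩. Then, with Ē_h(φ,s) = (ε²/2)⟨Lφ, φ⟩ + s, one has the exact identity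 Ē_h(φⁿ⁺¹, sⁿ⁺¹) - Ē_h(φⁿ, sⁿ) = -(1/τ) ‖φⁿ⁺¹ - φⁿ‖². -/
/-!
Testing the φ-equation with φⁿ⁺¹ - φⁿ, the explicit terms g f(φ̄) - κ g (φ^{n+1/2} - φ̄) produce
exactly -1/w times the increment of s prescribed by the s-equation, while the symmetry of L turns
the diffusion term into the increment of (ε²/2)⟨Lφ, φ⟩. Adding the two, only the dissipation
-(1/τ)‖φⁿ⁺¹ - φⁿ‖² is left.
-/

open Matrix

namespace Matrix.IsSymm

variable {n R : Type*} [Fintype n] {L : Matrix n n R}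

theorem mulVec_dotProduct_comm_s14 [CommSemiring R] (hL : L.IsSymm) (u v : n → R) :
    L *ᵥ u ⬝ᵥ v = L *ᵥ v ⬝ᵥ u := by
  rw [dotProduct_comm, dotProduct_mulVec, ← mulVec_transpose, hL.eq]

theorem mulVec_add_dotProduct_sub [CommRing R] (hL : L.IsSymm) (u v : n → R) :
    L *ᵥ (u + v) ⬝ᵥ (u - v) = L *ᵥ u ⬝ᵥ u - L *ᵥ v ⬝ᵥ v := by
  rw [mulVec_add, add_dotProduct, dotProduct_sub, dotProduct_sub, hL.mulVec_dotProduct_comm_s14 v u]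
  ring

theorem two_mul_mulVec_midpoint_dotProduct_sub [Field R] [NeZero (2 : R)] (hL : L.IsSymm)
    (u v : n → R) :
    2 * (L *ᵥ (fun k => (u k + v k) / 2) ⬝ᵥ (u - v)) = L *ᵥ u ⬝ᵥ u - L *ᵥ v ⬝ᵥ v := by
  have hmid : (fun k => (u k + v k) / 2) = (2 : R)⁻¹ • (u + v) := by
    ext k; simp [div_eq_inv_mul]
  rw [hmid, mulVec_smul, smul_dotProduct, smul_eq_mul, ← mul_assoc,
    mul_inv_cancel₀ two_ne_zero, one_mul, hL.mulVec_add_dotProduct_sub]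

end Matrix.IsSymm

theorem sESAV2_exact_energy_identity_general {M : ℕ}
    (L : Matrix (Fin M) (Fin M) ℝ) (hL : L.IsSymm)
    (w : ℝ)
    (f : ℝ → ℝ) (ε τ κ : ℝ) (hτ : 0 < τ)
    (φn φn1 φbar : Fin M → ℝ) (sn sn1 : ℝ) (g : ℝ)
    (hscheme : ∀ i, (φn1 i - φn i) / τ =
      -(ε ^ 2) * L.mulVec (fun k => (φn1 k + φn k) / 2) i
        + g * f (φbar i)
        - κ * g * ((φn1 i + φn i) / 2 - φbar i))
    (hsscheme : (sn1 - sn) / τ =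
      -g * (w * ∑ i, f (φbar i) * ((φn1 i - φn i) / τ))
        + κ * g *
          (w * ∑ i, ((φn1 i + φn i) / 2 - φbar i) * ((φn1 i - φn i) / τ))) :
    (ε ^ 2 / 2 * (w * ∑ i, L.mulVec φn1 i * φn1 i) + sn1)
      - (ε ^ 2 / 2 * (w * ∑ i, L.mulVec φn i * φn i) + sn)
      = -(1 / τ) * (w * ∑ i, (φn1 i - φn i) ^ 2) := by
  have hquad := hL.two_mul_mulVec_midpoint_dotProduct_sub φn1 φn
  have htested : (∑ i, (φn1 i - φn i) ^ 2) / τ =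
      -ε ^ 2 * (L *ᵥ (fun k => (φn1 k + φn k) / 2) ⬝ᵥ (φn1 - φn))
        + g * ∑ i, f (φbar i) * (φn1 i - φn i)
        - κ * g * ∑ i, ((φn1 i + φn i) / 2 - φbar i) * (φn1 i - φn i) := by
    simp only [dotProduct, Pi.sub_apply, Finset.sum_div, Finset.mul_sum, ← Finset.sum_add_distrib,
      ← Finset.sum_sub_distrib]
    refine Finset.sum_congr rfl fun i _ => ?_
    linear_combination (φn1 i - φn i) * hscheme i
  have hs_increment : sn1 - sn = w * (-g * ∑ i, f (φbar i) * (φn1 i - φn i)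
      + κ * g * ∑ i, ((φn1 i + φn i) / 2 - φbar i) * (φn1 i - φn i)) := by
    simp only [← mul_div_assoc, ← Finset.sum_div] at hsscheme
    rw [div_eq_iff hτ.ne'] at hsscheme
    rw [hsscheme]
    field_simp
  change ε ^ 2 / 2 * (w * (L *ᵥ φn1 ⬝ᵥ φn1)) + sn1 - (ε ^ 2 / 2 * (w * (L *ᵥ φn ⬝ᵥ φn)) + sn)
    = -(1 / τ) * (w * ∑ i, (φn1 i - φn i) ^ 2)
  linear_combination (-(ε ^ 2 / 2 * w)) * hquad + hs_increment + w * htested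

/-- Exact energy decrease identity of sESAV2: for symmetric `L`,
the sESAV2 scheme satisfies the exact identity
`Ē_h(φⁿ⁺¹,sⁿ⁺¹) - Ē_h(φⁿ,sⁿ) = -(1/τ)‖φⁿ⁺¹-φⁿ‖²`, with
`Ē_h(φ,s) = (ε²/2)⟨Lφ,φ⟩ + s`, `⟨u,v⟩ = w ∑_i u_i v_i`,
`‖u‖² = w ∑_i u_i²`. -/
theorem sESAV2_exact_energy_identity {M : ℕ}
    (L : Matrix (Fin M) (Fin M) ℝ) (hL : L.IsSymm)
    (w : ℝ) (hw : 0 < w)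
    (f : ℝ → ℝ) (ε τ κ : ℝ) (hτ : 0 < τ) (hκ : 0 ≤ κ)
    (φn φn1 φbar : Fin M → ℝ) (sn sn1 : ℝ) (g : ℝ)
    (hscheme : ∀ i, (φn1 i - φn i) / τ =
      -(ε ^ 2) * L.mulVec (fun k => (φn1 k + φn k) / 2) i
        + g * f (φbar i)
        - κ * g * ((φn1 i + φn i) / 2 - φbar i))
    (hsscheme : (sn1 - sn) / τ =
      -g * (w * ∑ i, f (φbar i) * ((φn1 i - φn i) / τ))
        + κ * g *
          (w * ∑ i, ((φn1 i + φn i) / 2 - φbar i) * ((φn1 i - φn i) / τ))) :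
    (ε ^ 2 / 2 * (w * ∑ i, L.mulVec φn1 i * φn1 i) + sn1)
      - (ε ^ 2 / 2 * (w * ∑ i, L.mulVec φn i * φn i) + sn)
      = -(1 / τ) * (w * ∑ i, (φn1 i - φn i) ^ 2) :=
  sESAV2_exact_energy_identity_general L hL w f ε τ κ hτ φn φn1 φbar sn sn1 g hscheme hsscheme
end

section
/- Let L : Matrix (Fin M) (Fin M) ℝ satisfy the nonlocal-stiffness sign structure: L i i ≥ 0 for all i, L i j ≤ 0 for all i ≠ j, and -L i i = ∑_{j ≠ i} L i j for all i. Let ε ∈ ℝ and a ∈ ℝ with a ≥ ε² L i i for all i and a ≥ 0. Then the matrix D₂ = a•I - ε²•L satisfies ‖D₂‖_∞ = a, where ‖A‖_∞ = max_i ∑_j |A i j|. -/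
/-!
`D₂ = a • 1 - ε² • L` is entrywise nonnegative: its diagonal by `ε² L i i ≤ a`, its off-diagonal
entries because those of `L` are nonpositive. Its rows sum to `a`, since those of `L` vanish, so
every absolute row sum of `D₂` equals `a`.
-/

open Matrix Finset

theorem Matrix.sum_row_eq_zero_of_neg_diag_eq_sum_erase {ι R : Type*} [Fintype ι] [DecidableEq ι]
    [Ring R] {L : Matrix ι ι R} {i : ι} (h : -L i i = ∑ j ∈ univ.erase i, L i j) :
    ∑ j, L i j = 0 := by
  rw [← add_sum_erase _ _ (mem_univ i), ← h, add_neg_cancel]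

theorem Matrix.sum_row_smul_one_sub_smul {ι R : Type*} [Fintype ι] [DecidableEq ι] [Ring R]
    (L : Matrix ι ι R) (a c : R) (i : ι) :
    ∑ j, (a • (1 : Matrix ι ι R) - c • L) i j = a - c * ∑ j, L i j := by
  simp [sum_sub_distrib, one_apply, mul_sum]

theorem Matrix.smul_one_sub_smul_apply_nonneg {ι R : Type*} [DecidableEq ι] [Ring R]
    [LinearOrder R] [IsOrderedRing R] {L : Matrix ι ι R} {a c : R} (hc : 0 ≤ c)
    (hoff : ∀ i j, i ≠ j → L i j ≤ 0) (ha : ∀ i, c * L i i ≤ a) (i j : ι) :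
    0 ≤ (a • (1 : Matrix ι ι R) - c • L) i j := by
  rcases eq_or_ne i j with rfl | hij
  · simpa using ha i
  · simpa [one_apply_ne hij] using mul_nonpos_of_nonneg_of_nonpos hc (hoff i j hij)

theorem Matrix.sum_abs_row_smul_one_sub_smul {ι R : Type*} [Fintype ι] [DecidableEq ι] [Ring R]
    [LinearOrder R] [IsOrderedRing R] {L : Matrix ι ι R} {a c : R} (hc : 0 ≤ c)
    (hoff : ∀ i j, i ≠ j → L i j ≤ 0)
    (hrow : ∀ i, -L i i = ∑ j ∈ univ.erase i, L i j) (ha : ∀ i, c * L i i ≤ a) (i : ι) :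
    ∑ j, |(a • (1 : Matrix ι ι R) - c • L) i j| = a := by
  simp_rw [abs_of_nonneg (smul_one_sub_smul_apply_nonneg hc hoff ha i _)]
  rw [sum_row_smul_one_sub_smul, sum_row_eq_zero_of_neg_diag_eq_sum_erase (hrow i), mul_zero,
    sub_zero]

theorem sESAV2_D2_inf_norm_general {M : ℕ} (hM : 0 < M)
    (L : Matrix (Fin M) (Fin M) ℝ)
    (hoff : ∀ i j, i ≠ j → L i j ≤ 0)
    (hrow : ∀ i, -L i i = ∑ j ∈ Finset.univ.erase i, L i j)
    (ε a : ℝ) (ha : ∀ i, ε ^ 2 * L i i ≤ a) :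
    (⨆ i, ∑ j, |(a • (1 : Matrix (Fin M) (Fin M) ℝ) - ε ^ 2 • L) i j|) = a := by
  have : Nonempty (Fin M) := ⟨⟨0, hM⟩⟩
  simp only [sum_abs_row_smul_one_sub_smul (sq_nonneg ε) hoff hrow ha, ciSup_const]

/-- if `L` has the nonlocal-stiffness sign structure and
`a ≥ ε² L i i` for all `i` with `a ≥ 0`, then `D₂ = a•I - ε²•L` has
∞-norm (maximal absolute row sum) exactly `a`. -/
theorem sESAV2_D2_inf_norm {M : ℕ} (hM : 0 < M)
    (L : Matrix (Fin M) (Fin M) ℝ)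
    (hdiag : ∀ i, 0 ≤ L i i)
    (hoff : ∀ i j, i ≠ j → L i j ≤ 0)
    (hrow : ∀ i, -L i i = ∑ j ∈ Finset.univ.erase i, L i j)
    (ε a : ℝ) (ha : ∀ i, ε ^ 2 * L i i ≤ a) (ha0 : 0 ≤ a) :
    (⨆ i, ∑ j, |(a • (1 : Matrix (Fin M) (Fin M) ℝ) - ε ^ 2 • L) i j|) = a :=
  sESAV2_D2_inf_norm_general hM L hoff hrow ε a ha
end

section
/- (MBP of sESAV2, one step.) Let L : Matrix (Fin M) (Fin M) ℝ satisfy the nonlocal-stiffness sign structure: L i i ≥ 0 for all i, L i j ≤ 0 for all i ≠ j, and -L i i = ∑_{j ≠ i} L i j for all i; assume moreover L i i ≤ 2/h² for all i, where h > 0 is the mesh size. Let β > 0, f : ℝ → ℝ continuously differentiable on [-β,β] with f(β) ≤ 0 ≤ f(-β), κ ≥ max_{ξ∈[-β,β]} |f'(ξ)|, ε ∈ ℝ, G* > 0, and let g satisfy 0 < g ≤ G*. Let the time step τ > 0 satisfy τ ≤ (κ G*/2 + ε²/h²)⁻¹. If φⁿ, φ̄ ∈ ℝ^M satisfy ‖φⁿ‖_∞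 ≤ β and ‖φ̄‖_∞ ≤ β, and φⁿ⁺¹ ∈ ℝ^M satisfies ((2/τ + κ g)•I + ε²•L) φⁿ⁺¹ = ((2/τ - κ g)•I - ε²•L) φⁿ + 2 g (f(φ̄) + κ φ̄) with f applied componentwise, then ‖φⁿ⁺¹‖_∞ ≤ β. -/
/-!
Reading `D₁x` at an index where `|x i|` is maximal, nonpositive off-diagonal entries and zero row
sums give `(2/τ + κg)‖x‖ ≤ ‖D₁x‖` for `D₁ = (2/τ + κg)I + ε²L`. The step restriction makes the
diagonal of `D₂ = (2/τ - κg)I - ε²L` nonnegative, and then `‖D₂y‖ ≤ (2/τ - κg)‖y‖`.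
Since `|f'| ≤ κ`, the map `ξ ↦ f ξ + κξ` is nondecreasing on `[-β, β]`, so `f β ≤ 0 ≤ f (-β)`
puts its values there in `[-κβ, κβ]`. Hence
`(2/τ + κg)‖φⁿ⁺¹‖ ≤ (2/τ - κg)β + 2gκβ = (2/τ + κg)β`.
-/

open Matrix Finset Set

namespace Matrix

variable {n : Type*} [Fintype n] [DecidableEq n]

theorem mulVec_apply_eq_diag_add_sum_erase (L : Matrix n n ℝ) (x : n → ℝ) (i : n) :
    (L *ᵥ x) i = L i i * x i + ∑ j ∈ univ.erase i, L i j * x j := by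
  rw [mulVec, dotProduct, ← add_sum_erase _ _ (mem_univ i)]

section SignStructure

variable {L : Matrix n n ℝ} (hoff : ∀ i j, i ≠ j → L i j ≤ 0)
  (hrow : ∀ i, -L i i = ∑ j ∈ univ.erase i, L i j)
include hoff hrow

theorem abs_sum_erase_mul_le (x : n → ℝ) (i : n) :
    |∑ j ∈ univ.erase i, L i j * x j| ≤ L i i * ‖x‖ :=
  calc |∑ j ∈ univ.erase i, L i j * x j|
      ≤ ∑ j ∈ univ.erase i, |L i j * x j| := abs_sum_le_sum_abs _ _
    _ ≤ ∑ j ∈ univ.erase i, -L i j * ‖x‖ := by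
        refine sum_le_sum fun j hj => ?_
        have hLij := hoff i j (ne_of_mem_erase hj).symm
        rw [abs_mul, abs_of_nonpos hLij, ← Real.norm_eq_abs]
        exact mul_le_mul_of_nonneg_left (norm_le_pi_norm x j) (neg_nonneg.2 hLij)
    _ = L i i * ‖x‖ := by rw [← sum_mul, sum_neg_distrib, ← hrow i, neg_neg]

theorem mul_norm_le_norm_smul_one_add_smul_mulVec {c s : ℝ} (hs : 0 ≤ s) (x : n → ℝ) :
    c * ‖x‖ ≤ ‖(c • 1 + s • L) *ᵥ x‖ := by
  rcases isEmpty_or_nonempty n with hn | hn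
  · simp [Subsingleton.elim x 0]
  obtain ⟨i, hi : ‖x i‖ = ‖x‖⟩ := (IsGreatest.pi_norm x).1
  set S := ∑ j ∈ univ.erase i, L i j * x j
  have hrowi : ((c • 1 + s • L) *ᵥ x) i = (c + s * L i i) * x i + s * S := by
    rw [add_mulVec, smul_mulVec, smul_mulVec, one_mulVec, Pi.add_apply, Pi.smul_apply,
      Pi.smul_apply, mulVec_apply_eq_diag_add_sum_erase, smul_eq_mul, smul_eq_mul]
    ring
  have hdiag : (c + s * L i i) * |x i| ≤ |(c + s * L i i) * x i| := by
    rw [abs_mul]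
    exact mul_le_mul_of_nonneg_right (le_abs_self _) (abs_nonneg _)
  have hoffdiag : |s * S| ≤ s * (L i i * ‖x‖) := by
    rw [abs_mul, abs_of_nonneg hs]
    exact mul_le_mul_of_nonneg_left (abs_sum_erase_mul_le hoff hrow x i) hs
  have htri := abs_sub_abs_le_abs_add ((c + s * L i i) * x i) (s * S)
  have hcomp := norm_le_pi_norm ((c • 1 + s • L) *ᵥ x) i
  rw [hrowi, Real.norm_eq_abs] at hcomp
  rw [Real.norm_eq_abs] at hi
  rw [hi] at hdiag
  linarith

theorem norm_smul_one_sub_smul_mulVec_le {c s : ℝ} (hs : 0 ≤ s) (hc : ∀ i, s * L i i ≤ c)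
    (x : n → ℝ) : ‖(c • 1 - s • L) *ᵥ x‖ ≤ c * ‖x‖ := by
  rcases isEmpty_or_nonempty n with hn | hn
  · simp [Subsingleton.elim x 0]
  refine (pi_norm_le_iff_of_nonempty _).2 fun i => ?_
  set S := ∑ j ∈ univ.erase i, L i j * x j
  have hrowi : ((c • 1 - s • L) *ᵥ x) i = (c - s * L i i) * x i - s * S := by
    rw [sub_mulVec, smul_mulVec, smul_mulVec, one_mulVec, Pi.sub_apply, Pi.smul_apply,
      Pi.smul_apply, mulVec_apply_eq_diag_add_sum_erase, smul_eq_mul, smul_eq_mul]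
    ring
  have hdiag : |(c - s * L i i) * x i| ≤ (c - s * L i i) * ‖x‖ := by
    rw [abs_mul, abs_of_nonneg (sub_nonneg.2 (hc i)), ← Real.norm_eq_abs (x i)]
    exact mul_le_mul_of_nonneg_left (norm_le_pi_norm x i) (sub_nonneg.2 (hc i))
  have hoffdiag : |s * S| ≤ s * (L i i * ‖x‖) := by
    rw [abs_mul, abs_of_nonneg hs]
    exact mul_le_mul_of_nonneg_left (abs_sum_erase_mul_le hoff hrow x i) hs
  rw [hrowi, Real.norm_eq_abs]
  linarith [abs_sub ((c - s * L i i) * x i) (s * S)]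

end SignStructure

end Matrix

section Stabilization

variable {f f' : ℝ → ℝ} {β κ : ℝ}

theorem monotoneOn_add_mul_of_neg_le_deriv {a b : ℝ}
    (hderiv : ∀ ξ ∈ Icc a b, HasDerivWithinAt f (f' ξ) (Icc a b) ξ)
    (hκ : ∀ ξ ∈ Icc a b, -κ ≤ f' ξ) : MonotoneOn (fun x => f x + κ * x) (Icc a b) := by
  refine monotoneOn_of_hasDerivWithinAt_nonneg (f' := fun x => f' x + κ) (convex_Icc a b)
    (fun x hx => ((hderiv x hx).add ((hasDerivWithinAt_id x _).const_mul κ)).continuousWithinAt)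
    (fun x hx => ?_) (fun x hx => ?_)
  all_goals rw [interior_Icc] at hx
  · have hlin : HasDerivWithinAt (fun y => κ * y) κ (Ioo a b) x := by
      simpa using (hasDerivWithinAt_id x _).const_mul κ
    rw [interior_Icc]
    exact ((hderiv x (Ioo_subset_Icc_self hx)).mono Ioo_subset_Icc_self).add hlin
  · linarith [hκ x (Ioo_subset_Icc_self hx)]

theorem abs_add_mul_le_of_abs_deriv_le
    (hderiv : ∀ ξ ∈ Icc (-β) β, HasDerivWithinAt f (f' ξ) (Icc (-β) β) ξ)
    (hκ : ∀ ξ ∈ Icc (-β) β, |f' ξ| ≤ κ) (hfβ : f β ≤ 0) (hfmβ : 0 ≤ f (-β))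
    {x : ℝ} (hx : x ∈ Icc (-β) β) : |f x + κ * x| ≤ κ * β := by
  have hmono := monotoneOn_add_mul_of_neg_le_deriv hderiv fun ξ hξ => neg_le_of_abs_le (hκ ξ hξ)
  have hlo := hmono ⟨le_rfl, hx.1.trans hx.2⟩ hx hx.1
  have hhi := hmono hx ⟨hx.1.trans hx.2, le_rfl⟩ hx.2
  simp only at hlo hhi
  exact abs_le.2 ⟨by linarith, by linarith⟩

theorem norm_mul_add_mul_le_of_abs_deriv_le {ι : Type*} [Fintype ι]
    (hderiv : ∀ ξ ∈ Icc (-β) β, HasDerivWithinAt f (f' ξ) (Icc (-β) β) ξ)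
    (hκ : ∀ ξ ∈ Icc (-β) β, |f' ξ| ≤ κ) (hfβ : f β ≤ 0) (hfmβ : 0 ≤ f (-β))
    {c : ℝ} (hc : 0 ≤ c) {φ : ι → ℝ} (hφ : ‖φ‖ ≤ β) :
    ‖fun i => c * (f (φ i) + κ * φ i)‖ ≤ c * (κ * β) := by
  have hβ : 0 ≤ β := (norm_nonneg φ).trans hφ
  have hκβ : 0 ≤ κ * β := (abs_nonneg _).trans
    (abs_add_mul_le_of_abs_deriv_le hderiv hκ hfβ hfmβ ⟨neg_le_self hβ, le_rfl⟩)
  refine (pi_norm_le_iff_of_nonneg (mul_nonneg hc hκβ)).2 fun i => ?_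
  rw [Real.norm_eq_abs, abs_mul, abs_of_nonneg hc]
  refine mul_le_mul_of_nonneg_left (abs_add_mul_le_of_abs_deriv_le hderiv hκ hfβ hfmβ ?_) hc
  exact abs_le.1 ((Real.norm_eq_abs _).symm.trans_le ((norm_le_pi_norm φ i).trans hφ))

end Stabilization

theorem mul_add_sq_mul_two_div_sq_le_two_div {κ G g ε h τ : ℝ} (hκ : 0 ≤ κ) (hgG : g ≤ G)
    (hτ : 0 < τ) (hτle : τ ≤ (κ * G / 2 + ε ^ 2 / h ^ 2)⁻¹) :
    κ * g + ε ^ 2 * (2 / h ^ 2) ≤ 2 / τ := by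
  have hC : κ * G / 2 + ε ^ 2 / h ^ 2 ≤ τ⁻¹ := by
    rcases le_or_gt (κ * G / 2 + ε ^ 2 / h ^ 2) 0 with hC | hC
    · exact hC.trans (inv_nonneg.2 hτ.le)
    · exact (le_inv_comm₀ hτ hC).1 hτle
  have := mul_le_mul_of_nonneg_left hgG hκ
  rw [div_eq_mul_inv 2 τ]
  linarith [show ε ^ 2 * (2 / h ^ 2) = 2 * (ε ^ 2 / h ^ 2) by ring]

theorem sESAV2_MBP_one_step_general {M : ℕ} (L : Matrix (Fin M) (Fin M) ℝ)
    (hoff : ∀ i j, i ≠ j → L i j ≤ 0)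
    (hrow : ∀ i, -L i i = ∑ j ∈ Finset.univ.erase i, L i j)
    (h : ℝ) (hLdiag : ∀ i, L i i ≤ 2 / h ^ 2)
    (β : ℝ)
    (f f' : ℝ → ℝ)
    (hderiv : ∀ ξ ∈ Set.Icc (-β) β,
      HasDerivWithinAt f (f' ξ) (Set.Icc (-β) β) ξ)
    (hfβ : f β ≤ 0) (hfmβ : 0 ≤ f (-β))
    (κ : ℝ) (hκ : ∀ ξ ∈ Set.Icc (-β) β, |f' ξ| ≤ κ)
    (ε Gstar g : ℝ) (hg0 : 0 < g) (hgG : g ≤ Gstar)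
    (τ : ℝ) (hτ : 0 < τ) (hτle : τ ≤ (κ * Gstar / 2 + ε ^ 2 / h ^ 2)⁻¹)
    (φn φbar φn1 : Fin M → ℝ) (hφn : ‖φn‖ ≤ β) (hφbar : ‖φbar‖ ≤ β)
    (hupdate :
      ((2 / τ + κ * g) • (1 : Matrix (Fin M) (Fin M) ℝ) + ε ^ 2 • L).mulVec φn1
        = ((2 / τ - κ * g) • (1 : Matrix (Fin M) (Fin M) ℝ)
            - ε ^ 2 • L).mulVec φn
          + fun i => 2 * g * (f (φbar i) + κ * φbar i)) :
    ‖φn1‖ ≤ β := by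
  have hβ : 0 ≤ β := (norm_nonneg φn).trans hφn
  have hκ0 : 0 ≤ κ := (abs_nonneg _).trans (hκ 0 ⟨neg_nonpos.2 hβ, hβ⟩)
  have hτκε := mul_add_sq_mul_two_div_sq_le_two_div hκ0 hgG hτ hτle
  have hstep i : ε ^ 2 * L i i ≤ 2 / τ - κ * g := by
    linarith [mul_le_mul_of_nonneg_left (hLdiag i) (sq_nonneg ε)]
  have hcoef : 0 ≤ 2 / τ - κ * g := by
    linarith [show 0 ≤ ε ^ 2 * (2 / h ^ 2) by positivity]
  have hnonlin :=
    norm_mul_add_mul_le_of_abs_deriv_le hderiv hκ hfβ hfmβ (by positivity : 0 ≤ 2 * g) hφbar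
  refine le_of_mul_le_mul_left ?_ (by positivity : 0 < 2 / τ + κ * g)
  calc (2 / τ + κ * g) * ‖φn1‖
      ≤ ‖((2 / τ + κ * g) • 1 + ε ^ 2 • L) *ᵥ φn1‖ :=
        mul_norm_le_norm_smul_one_add_smul_mulVec hoff hrow (sq_nonneg ε) φn1
    _ ≤ ‖((2 / τ - κ * g) • 1 - ε ^ 2 • L) *ᵥ φn‖
          + ‖fun i => 2 * g * (f (φbar i) + κ * φbar i)‖ := hupdate ▸ norm_add_le _ _
    _ ≤ (2 / τ - κ * g) * β + 2 * g * (κ * β) :=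
        add_le_add ((norm_smul_one_sub_smul_mulVec_le hoff hrow (sq_nonneg ε) hstep φn).trans
          (mul_le_mul_of_nonneg_left hφn hcoef)) hnonlin
    _ = (2 / τ + κ * g) * β := by ring

/-- MBP of sESAV2, one step: under the nonlocal-stiffness sign
structure with `L i i ≤ 2/h²`, the stabilization condition
`κ ≥ max_{[-β,β]}|f'|`, a bound `0 < g ≤ G*` on the scalar factor, and the
time-step restriction `τ ≤ (κG*/2 + ε²/h²)⁻¹`, the sESAV2 update
`D₁φⁿ⁺¹ = D₂φⁿ + 2g(f(φ̄)+κφ̄)` preserves `‖·‖_∞ ≤ β`.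
Here `‖·‖` on `Fin M → ℝ` is the sup-norm. -/
theorem sESAV2_MBP_one_step {M : ℕ} (L : Matrix (Fin M) (Fin M) ℝ)
    (hdiag : ∀ i, 0 ≤ L i i)
    (hoff : ∀ i j, i ≠ j → L i j ≤ 0)
    (hrow : ∀ i, -L i i = ∑ j ∈ Finset.univ.erase i, L i j)
    (h : ℝ) (hh : 0 < h) (hLdiag : ∀ i, L i i ≤ 2 / h ^ 2)
    (β : ℝ) (hβ : 0 < β)
    (f f' : ℝ → ℝ)
    (hderiv : ∀ ξ ∈ Set.Icc (-β) β,
      HasDerivWithinAt f (f' ξ) (Set.Icc (-β) β) ξ)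
    (hf'cont : ContinuousOn f' (Set.Icc (-β) β))
    (hfβ : f β ≤ 0) (hfmβ : 0 ≤ f (-β))
    (κ : ℝ) (hκ : ∀ ξ ∈ Set.Icc (-β) β, |f' ξ| ≤ κ)
    (ε Gstar g : ℝ) (hG : 0 < Gstar) (hg0 : 0 < g) (hgG : g ≤ Gstar)
    (τ : ℝ) (hτ : 0 < τ) (hτle : τ ≤ (κ * Gstar / 2 + ε ^ 2 / h ^ 2)⁻¹)
    (φn φbar φn1 : Fin M → ℝ) (hφn : ‖φn‖ ≤ β) (hφbar : ‖φbar‖ ≤ β)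
    (hupdate :
      ((2 / τ + κ * g) • (1 : Matrix (Fin M) (Fin M) ℝ) + ε ^ 2 • L).mulVec φn1
        = ((2 / τ - κ * g) • (1 : Matrix (Fin M) (Fin M) ℝ)
            - ε ^ 2 • L).mulVec φn
          + fun i => 2 * g * (f (φbar i) + κ * φbar i)) :
    ‖φn1‖ ≤ β :=
  sESAV2_MBP_one_step_general L hoff hrow h hLdiag β f f' hderiv hfβ hfmβ κ hκ ε Gstar g hg0 hgG τ
    hτ hτle φn φbar φn1 hφn hφbar hupdate
end

section
/- Let L : Matrix (Fin M) (Fin M) ℝ be symmetric and positive semi-definite, w > 0 a weight, ⟨u,v⟩ = w ∑_i u_i v_i, ε ∈ ℝ, and Ē_h(φ,s) = (ε²/2)⟨Lφ,φ⟩ + s the modified discrete energy. Let (φⁿ)_{n≥0} be a sequence in ℝ^M and (sⁿ)_{n≥0} a sequence in ℝ such that Ē_h(φⁿ⁺¹, sⁿ⁺¹) ≤ Ē_h(φⁿ, sⁿ) for all n ≥ 0. Then sⁿ ≤ Ē_h(φ⁰, s⁰) for all n ≥ 0. Consequently, if F : ℝ → ℝ, C* ≥ 0 and β > 0 are such that E₁h(ω)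 := w ∑_i F(ω_i) ≥ -C* whenever ‖ω‖_∞ ≤ β, and ‖φⁿ‖_∞ ≤ β for all n, then the exponential factor g(φⁿ, sⁿ) = exp(sⁿ)/exp(E₁h(φⁿ)) satisfies 0 < g(φⁿ, sⁿ) ≤ exp(Ē_h(φ⁰, s⁰) + C*) for all n ≥ 0. -/
/-!
Since `L` is positive semidefinite, the quadratic part of `Ē_h` is nonnegative, so along a
trajectory with nonincreasing energy `sⁿ ≤ Ē_h(φⁿ, sⁿ) ≤ Ē_h(φ⁰, s⁰)`. With `E₁h(φⁿ) ≥ -C*`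
the exponent `sⁿ - E₁h(φⁿ)` of `g` is then at most `Ē_h(φ⁰, s⁰) + C*`.
-/

open Matrix

noncomputable def modifiedEnergy {ι : Type*} [Fintype ι] (L : Matrix ι ι ℝ) (w ε : ℝ)
    (φ : ι → ℝ) (s : ℝ) : ℝ :=
  ε ^ 2 / 2 * (w * ∑ i, L.mulVec φ i * φ i) + s

theorem Matrix.PosSemidef.sum_mulVec_mul_nonneg {ι : Type*} [Fintype ι]
    {L : Matrix ι ι ℝ} (hL : L.PosSemidef) (x : ι → ℝ) :
    0 ≤ ∑ i, L.mulVec x i * x i := by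
  simpa only [dotProduct, star_trivial, mul_comm] using hL.dotProduct_mulVec_nonneg x

theorem le_modifiedEnergy {ι : Type*} [Fintype ι] {L : Matrix ι ι ℝ} (hL : L.PosSemidef)
    {w : ℝ} (hw : 0 ≤ w) (ε : ℝ) (φ : ι → ℝ) (s : ℝ) :
    s ≤ modifiedEnergy L w ε φ s :=
  le_add_of_nonneg_left <|
    mul_nonneg (by positivity) (mul_nonneg hw (hL.sum_mulVec_mul_nonneg φ))

theorem Real.exp_div_exp_le_exp_add {s e B C : ℝ} (hs : s ≤ B) (he : -C ≤ e) :
    Real.exp s / Real.exp e ≤ Real.exp (B + C) := by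
  rw [← Real.exp_sub]
  exact Real.exp_le_exp.mpr (by linarith)

/-- Corollary 1: if the modified discrete energy
`Ē_h(φ,s) = (ε²/2)⟨Lφ,φ⟩ + s` is nonincreasing along the discrete trajectory,
then `sⁿ ≤ Ē_h(φ⁰,s⁰)` for all `n`; consequently, if `E₁h(ω) = w ∑ F(ω_i)` is
bounded below by `-C*` on the ball `‖ω‖_∞ ≤ β` and `‖φⁿ‖_∞ ≤ β` for all `n`,
the exponential factor `g(φⁿ,sⁿ) = exp(sⁿ)/exp(E₁h(φⁿ))` satisfies
`0 < g(φⁿ,sⁿ) ≤ exp(Ē_h(φ⁰,s⁰) + C*)`.  Here `‖·‖` on `Fin M → ℝ` is the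
sup-norm. -/
theorem sESAV_exponential_factor_bound {M : ℕ}
    (L : Matrix (Fin M) (Fin M) ℝ) (hL : L.PosSemidef)
    (w : ℝ) (hw : 0 < w) (ε : ℝ)
    (φ : ℕ → Fin M → ℝ) (s : ℕ → ℝ)
    (hdec : ∀ n,
      ε ^ 2 / 2 * (w * ∑ i, L.mulVec (φ (n + 1)) i * φ (n + 1) i) + s (n + 1) ≤
        ε ^ 2 / 2 * (w * ∑ i, L.mulVec (φ n) i * φ n i) + s n) :
    (∀ n, s n ≤ ε ^ 2 / 2 * (w * ∑ i, L.mulVec (φ 0) i * φ 0 i) + s 0) ∧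
    ∀ (F : ℝ → ℝ) (Cstar β : ℝ), 0 ≤ Cstar → 0 < β →
      (∀ ω : Fin M → ℝ, ‖ω‖ ≤ β → -Cstar ≤ w * ∑ i, F (ω i)) →
      (∀ n, ‖φ n‖ ≤ β) →
      ∀ n,
        0 < Real.exp (s n) / Real.exp (w * ∑ i, F (φ n i)) ∧
        Real.exp (s n) / Real.exp (w * ∑ i, F (φ n i)) ≤
          Real.exp
            ((ε ^ 2 / 2 * (w * ∑ i, L.mulVec (φ 0) i * φ 0 i) + s 0) + Cstar) := by
  have henergy : Antitone fun n ↦ modifiedEnergy L w ε (φ n) (s n) :=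
    antitone_nat_of_succ_le hdec
  have hs (n : ℕ) : s n ≤ modifiedEnergy L w ε (φ 0) (s 0) :=
    (le_modifiedEnergy hL hw.le ε (φ n) (s n)).trans (henergy (Nat.zero_le n))
  refine ⟨hs, fun F Cstar β _ _ hF hφ n ↦ ⟨by positivity, ?_⟩⟩
  exact Real.exp_div_exp_le_exp_add (hs n) (hF (φ n) (hφ n))
end
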